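/- arXiv:math/0703808 — 4 statements merged into one kernel-verified Lean document; each statement's English description precedes it below -/
import Mathlib

section
/- Let n ≥ 3 and c ≥ (n−2)²/4. Then there is no positive function u ∈ C^∞(ℝⁿ \ {0}) satisfying Δu(x) + (c/|x|²) u(x) + u(x)^{(n+2)/(n−2)} = 0 for all x ∈ ℝⁿ \ {0}. -/
open MeasureTheory Metric Set Finset Filter
open scoped Topology ENNReal BigOperators

set_option maxHeartbeats 1000000

namespace NoSolAux


variable {n : ℕ}

local notation "E" => EuclideanSpace ℝ (Fin n)

noncomputable abbrev sgl (i : Fin n) : E := EuclideanSpace.single i 1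

/-- The annulus `1 ≤ ‖x‖ ≤ 2`. -/
def Ann (n : ℕ) : Set (EuclideanSpace ℝ (Fin n)) := {x | 1 ≤ ‖x‖ ∧ ‖x‖ ≤ 2}

lemma isCompact_Ann : IsCompact (Ann n) := by
  have h1 : Ann n = (fun x : E => ‖x‖) ⁻¹' (Icc 1 2) := rfl
  have hcl : IsClosed (Ann n) := h1 ▸ isClosed_Icc.preimage continuous_norm
  refine (isCompact_closedBall (0 : E) 2).of_isClosed_subset hcl ?_
  intro x hx
  simpa [mem_closedBall, dist_eq_norm] using hx.2

lemma measurableSet_Ann : MeasurableSet (Ann n) := by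
  have h1 : Ann n = (fun x : E => ‖x‖) ⁻¹' (Icc 1 2) := rfl
  exact h1 ▸ (isClosed_Icc.preimage continuous_norm).measurableSet

lemma Ann_ne_zero_mem {x : E} (hx : x ∈ Ann n) : x ≠ 0 := by
  intro h; rw [h] at hx; have := hx.1; norm_num at this

lemma abs_apply_le_norm (x : E) (i : Fin n) : |x i| ≤ ‖x‖ := by
  have h2 : |x i| ^ 2 ≤ ∑ k, ‖x k‖ ^ 2 := by
    have := Finset.single_le_sum (f := fun k => ‖x k‖ ^ 2)
      (fun k _ => by positivity) (Finset.mem_univ i)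
    simpa [Real.norm_eq_abs, sq_abs] using this
  rw [EuclideanSpace.norm_eq]
  have := Real.sqrt_le_sqrt h2
  rwa [Real.sqrt_sq (abs_nonneg _)] at this

lemma sum_repr_single (x : E) : ∑ i, x i • sgl i = x := by
  simpa [EuclideanSpace.basisFun_apply, EuclideanSpace.basisFun_repr] using
    (EuclideanSpace.basisFun (Fin n) ℝ).sum_repr x

/-- generator vector field of the rotation -/
noncomputable def rotGen (i j : Fin n) (x : E) : E := x j • sgl i - x i • sgl j

section Rot

variable (i j : Fin n)

/-- Rotation by angle `t` in the `(i,j)` coordinate plane. -/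
noncomputable def rotF (t : ℝ) (x : E) : E := WithLp.toLp 2 fun k =>
  if k = i then Real.cos t * x i + Real.sin t * x j
  else if k = j then Real.cos t * x j - Real.sin t * x i
  else x k

lemma rotF_apply (t : ℝ) (x : E) (k : Fin n) :
    rotF i j t x k =
      if k = i then Real.cos t * x i + Real.sin t * x j
      else if k = j then Real.cos t * x j - Real.sin t * x i
      else x k := rfl

variable {i j} (hij : i ≠ j)

include hij in
lemma sum_split (f : Fin n → ℝ) :
    ∑ k, f k = f i + f j + ∑ k ∈ (Finset.univ.erase i).erase j, f k := by
  rw [← Finset.add_sum_erase _ f (Finset.mem_univ i)]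
  rw [← Finset.add_sum_erase _ f (Finset.mem_erase.2 ⟨hij.symm, Finset.mem_univ j⟩)]
  ring

include hij in
lemma rotF_norm (t : ℝ) (x : E) : ‖rotF i j t x‖ = ‖x‖ := by
  rw [EuclideanSpace.norm_eq, EuclideanSpace.norm_eq]
  congr 1
  rw [sum_split hij, sum_split hij (f := fun k => ‖x k‖ ^ 2)]
  have e1 : ∀ k ∈ (Finset.univ.erase i).erase j, ‖rotF i j t x k‖ ^ 2 = ‖x k‖ ^ 2 := by
    intro k hk
    have hk1 := Finset.ne_of_mem_erase hk
    have hk2 := Finset.ne_of_mem_erase (Finset.mem_of_mem_erase hk)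
    rw [rotF_apply, if_neg hk2, if_neg hk1]
  rw [Finset.sum_congr rfl e1]
  have hii : rotF i j t x i = Real.cos t * x i + Real.sin t * x j := by
    rw [rotF_apply, if_pos rfl]
  have hjj : rotF i j t x j = Real.cos t * x j - Real.sin t * x i := by
    rw [rotF_apply, if_neg hij.symm, if_pos rfl]
  rw [hii, hjj]
  simp only [Real.norm_eq_abs, sq_abs]
  nlinarith [Real.sin_sq_add_cos_sq t]

include hij in
omit hij in
lemma rotF_linear (t : ℝ) : IsLinearMap ℝ (rotF i j t) := by
  constructor
  · intro x y; ext k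
    simp only [rotF_apply, PiLp.add_apply]
    split_ifs <;> ring
  · intro c x; ext k
    simp only [rotF_apply, PiLp.smul_apply, smul_eq_mul]
    split_ifs <;> ring

/-- The rotation as a linear isometry equivalence. -/
noncomputable def rotLI (t : ℝ) : E ≃ₗᵢ[ℝ] E :=
  LinearIsometry.toLinearIsometryEquiv
    ⟨IsLinearMap.mk' (rotF i j t) (rotF_linear (i := i) (j := j) t), fun x => rotF_norm hij t x⟩ rfl

lemma rotLI_apply (t : ℝ) (x : E) : rotLI hij t x = rotF i j t x := rfl

include hij in
lemma rotF_zero (x : E) : rotF i j 0 x = x := by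
  ext k
  simp only [rotF_apply, Real.cos_zero, Real.sin_zero]
  split_ifs with h1 h2
  · subst h1; ring
  · subst h2; ring
  · rfl

include hij in
lemma hasDerivAt_rotF (x : E) (t : ℝ) :
    HasDerivAt (fun s => rotF i j s x)
      ((-Real.sin t) • (x i • sgl i + x j • sgl j) + Real.cos t • (x j • sgl i - x i • sgl j)) t := by
  have hrw : (fun s => rotF i j s x) = fun s =>
      x + (Real.cos s - 1) • (x i • sgl i + x j • sgl j)
        + Real.sin s • (x j • sgl i - x i • sgl j) := by
    funext s
    ext k
    rcases eq_or_ne k i with h1 | h1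
    · subst h1; simp [rotF_apply, sgl, EuclideanSpace.single_apply, hij]; ring
    · rcases eq_or_ne k j with h2 | h2
      · subst h2; simp [rotF_apply, sgl, EuclideanSpace.single_apply, h1, hij.symm]; ring
      · simp [rotF_apply, sgl, EuclideanSpace.single_apply, h1, h2]
  rw [hrw]
  have h1 : HasDerivAt (fun s : ℝ => Real.cos s - 1) (-Real.sin t) t :=
    (Real.hasDerivAt_cos t).sub_const 1
  have h2 := (h1.smul_const (x i • sgl i + x j • sgl j)).const_add x
  have h3 := (Real.hasDerivAt_sin t).smul_const (x j • sgl i - x i • sgl j)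
  exact h2.add h3

end Rot

section MeasureStuff

instance : IsFiniteMeasure ((volume : Measure (EuclideanSpace ℝ (Fin n))).restrict (Ann n)) :=
  ⟨by rw [Measure.restrict_apply_univ]; exact isCompact_Ann.measure_lt_top⟩

lemma integral_rot_invariant {i j : Fin n} (hij : i ≠ j) (t : ℝ) (v : E → ℝ) :
    ∫ x in Ann n, v (rotF i j t x) = ∫ x in Ann n, v x := by
  have hmp : MeasurePreserving (rotLI hij t) (volume : Measure E) volume :=
    (rotLI hij t).measurePreserving
  have hemb : MeasurableEmbedding (rotLI hij t) :=
    (rotLI hij t).toHomeomorph.measurableEmbedding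
  have hpre : (rotLI hij t) ⁻¹' (Ann n) = Ann n := by
    ext x
    simp only [Set.mem_preimage, Ann, mem_setOf_eq, rotLI_apply, rotF_norm hij]
  have h := hmp.setIntegral_preimage_emb hemb v (Ann n)
  rw [hpre] at h
  exact h

lemma continuous_apply_E (k : Fin n) : Continuous fun x : E => x k := by
  exact (continuous_apply k).comp (PiLp.continuousLinearEquiv 2 ℝ (fun _ : Fin n => ℝ)).continuous

lemma continuous_rotGen (i j : Fin n) : Continuous (rotGen i j : E → E) := by
  apply Continuous.sub
  · exact (continuous_apply_E j).smul continuous_const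
  · exact (continuous_apply_E i).smul continuous_const

lemma norm_pair_le (x : E) (i j : Fin n) (a b : ℝ) (ha : |a| ≤ ‖x‖) (hb : |b| ≤ ‖x‖) :
    ‖a • sgl i + b • sgl j‖ ≤ 2 * ‖x‖ := by
  have h1 : ‖a • (sgl i : E)‖ = |a| := by
    rw [norm_smul, EuclideanSpace.norm_single]; simp [Real.norm_eq_abs]
  have h2 : ‖b • (sgl j : E)‖ = |b| := by
    rw [norm_smul, EuclideanSpace.norm_single]; simp [Real.norm_eq_abs]
  calc ‖a • (sgl i : E) + b • sgl j‖ ≤ ‖a • (sgl i : E)‖ + ‖b • (sgl j : E)‖ := norm_add_le _ _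
  _ ≤ ‖x‖ + ‖x‖ := by rw [h1, h2]; exact add_le_add ha hb
  _ = 2 * ‖x‖ := by ring

lemma norm_pair_le' (x : E) (i j : Fin n) (a b : ℝ) (ha : |a| ≤ ‖x‖) (hb : |b| ≤ ‖x‖) :
    ‖a • sgl i - b • sgl j‖ ≤ 2 * ‖x‖ := by
  have := norm_pair_le x i j a (-b) ha (by rwa [abs_neg])
  rwa [neg_smul, ← sub_eq_add_neg] at this

/-- Key lemma: the integral of a derivative along the rotation generator vanishes. -/
lemma integral_rotgen_eq_zero {i j : Fin n} (hij : i ≠ j)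
    (v : E → ℝ) (v' : E → E →L[ℝ] ℝ)
    (hd : ∀ y ∈ Ann n, HasFDerivAt v (v' y) y)
    (hc' : ContinuousOn v' (Ann n)) :
    ∫ x in Ann n, v' x (rotGen i j x) = 0 := by
  have hcv : ContinuousOn v (Ann n) := fun y hy => ((hd y hy).continuousAt).continuousWithinAt
  obtain ⟨C, hC⟩ := isCompact_Ann.exists_bound_of_continuousOn hc'
  have hC0 : 0 ≤ C := by
    rcases (⟨sgl ⟨0, by omega⟩, by simp [Ann, EuclideanSpace.norm_single], by
        simp [Ann, EuclideanSpace.norm_single]⟩ :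
        ∃ y : E, 1 ≤ ‖y‖ ∧ ‖y‖ ≤ 2) with ⟨y, hy1, hy2⟩
    exact le_trans (norm_nonneg _) (hC y ⟨hy1, hy2⟩)
  set μ := (volume : Measure E).restrict (Ann n) with hμ
  have hAnnm := measurableSet_Ann (n := n)
  have hcont_rot : ∀ t, Continuous (rotF i j t) := fun t => (rotLI hij t).continuous
  have hrotmem : ∀ (t : ℝ), ∀ x ∈ Ann n, rotF i j t x ∈ Ann n := fun t x hx =>
    ⟨by rw [rotF_norm hij]; exact hx.1, by rw [rotF_norm hij]; exact hx.2⟩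
  set Φ : ℝ → E → ℝ := fun t x => v (rotF i j t x) with hΦ
  set Φ' : ℝ → E → ℝ := fun t x =>
    v' (rotF i j t x) ((-Real.sin t) • (x i • sgl i + x j • sgl j)
      + Real.cos t • (x j • sgl i - x i • sgl j)) with hΦ'
  have hmeas : ∀ t : ℝ, AEStronglyMeasurable (Φ t) μ := by
    intro t
    exact (hcv.comp (hcont_rot t).continuousOn fun x hx => hrotmem t x hx).aestronglyMeasurable
      hAnnm
  have hint : Integrable (Φ 0) μ := by
    apply ContinuousOn.integrableOn_compact isCompact_Ann
    exact hcv.comp (hcont_rot 0).continuousOn fun x hx => hrotmem 0 x hx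
  have hmeas' : AEStronglyMeasurable (Φ' 0) μ := by
    apply ContinuousOn.aestronglyMeasurable _ hAnnm
    apply ContinuousOn.clm_apply
    · exact hc'.comp (hcont_rot 0).continuousOn fun x hx => hrotmem 0 x hx
    · apply ContinuousOn.add
      · exact ((((continuous_apply_E i).smul (continuous_const : Continuous fun _ : E => sgl i)).add
          ((continuous_apply_E j).smul (continuous_const : Continuous fun _ : E => sgl j))).const_smul
          (-Real.sin 0)).continuousOn
      · exact (((((continuous_apply_E j).smul (continuous_const : Continuous fun _ : E => sgl i)).sub
          ((continuous_apply_E i).smul (continuous_const : Continuous fun _ : E => sgl j)))).const_smul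
          (Real.cos 0)).continuousOn
  have h_bound : ∀ᵐ x ∂μ, ∀ t ∈ ball (0:ℝ) 1, ‖Φ' t x‖ ≤ C * 8 := by
    refine (ae_restrict_iff' hAnnm).2 (Filter.Eventually.of_forall fun x hx => ?_)
    intro t _
    have hmem := hrotmem t x hx
    have hnx : ‖x‖ ≤ 2 := hx.2
    have h1 : ‖(-Real.sin t) • (x i • (sgl i : E) + x j • sgl j)
        + Real.cos t • (x j • sgl i - x i • sgl j)‖ ≤ 8 := by
      have e1 : ‖x i • (sgl i : E) + x j • sgl j‖ ≤ 2 * ‖x‖ :=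
        norm_pair_le x i j _ _ (abs_apply_le_norm x i) (abs_apply_le_norm x j)
      have e2 : ‖x j • (sgl i : E) - x i • sgl j‖ ≤ 2 * ‖x‖ :=
        norm_pair_le' x i j _ _ (abs_apply_le_norm x j) (abs_apply_le_norm x i)
      calc ‖(-Real.sin t) • (x i • (sgl i : E) + x j • sgl j)
          + Real.cos t • (x j • sgl i - x i • sgl j)‖
          ≤ ‖(-Real.sin t) • (x i • (sgl i : E) + x j • sgl j)‖
            + ‖Real.cos t • (x j • (sgl i : E) - x i • sgl j)‖ := norm_add_le _ _
        _ ≤ 1 * (2 * ‖x‖) + 1 * (2 * ‖x‖) := by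
            rw [norm_smul, norm_smul]
            gcongr
            · simp [Real.norm_eq_abs, abs_neg, Real.abs_sin_le_one t]
            · simp [Real.norm_eq_abs, Real.abs_cos_le_one t]
        _ ≤ 1 * (2 * 2) + 1 * (2 * 2) := by gcongr
        _ = 8 := by norm_num
    calc ‖Φ' t x‖ ≤ ‖v' (rotF i j t x)‖ * ‖((-Real.sin t) • (x i • (sgl i : E) + x j • sgl j)
          + Real.cos t • (x j • sgl i - x i • sgl j))‖ :=
          (v' (rotF i j t x)).le_opNorm _
      _ ≤ C * 8 := mul_le_mul (hC _ hmem) h1 (norm_nonneg _) hC0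
  have h_diff : ∀ᵐ x ∂μ, ∀ t ∈ ball (0:ℝ) 1, HasDerivAt (Φ · x) (Φ' t x) t := by
    refine (ae_restrict_iff' hAnnm).2 (Filter.Eventually.of_forall fun x hx => ?_)
    intro t _
    exact (hd _ (hrotmem t x hx)).comp_hasDerivAt t (hasDerivAt_rotF hij x t)
  obtain ⟨-, hderiv⟩ := hasDerivAt_integral_of_dominated_loc_of_deriv_le
    (μ := μ) (x₀ := (0:ℝ)) (ball_mem_nhds (0:ℝ) one_pos) (Filter.Eventually.of_forall hmeas) hint hmeas'
    h_bound (integrable_const _) h_diff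
  have hconst : (fun t : ℝ => ∫ x, Φ t x ∂μ) = fun _ : ℝ => ∫ x, Φ 0 x ∂μ := by
    funext t
    have h := integral_rot_invariant hij t v
    have h0 := integral_rot_invariant hij 0 v
    rw [hμ]
    simp only [hΦ]
    rw [h, h0]
  have hzero : HasDerivAt (fun t : ℝ => ∫ x, Φ t x ∂μ) 0 0 := by
    rw [hconst]; exact hasDerivAt_const _ _
  have hval : ∫ x, Φ' 0 x ∂μ = 0 := hderiv.unique hzero
  have hfun : (fun x : E => Φ' 0 x) = fun x => v' x (rotGen i j x) := by
    funext x
    simp only [hΦ', Real.sin_zero, Real.cos_zero, neg_zero, zero_smul, one_smul, zero_add]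
    rw [rotF_zero hij]
    rfl
  rw [hμ] at hval
  rw [← hfun]
  exact hval

end MeasureStuff

section SecondOrder

/-- The generator as a continuous linear map. -/
noncomputable def rotGenL (i j : Fin n) : E →L[ℝ] E :=
  LinearMap.toContinuousLinearMap (IsLinearMap.mk' (rotGen i j) (by
    constructor
    · intro x y
      simp only [rotGen, PiLp.add_apply]
      module
    · intro c x
      simp only [rotGen, PiLp.smul_apply, smul_eq_mul]
      module))

lemma rotGenL_apply (i j : Fin n) (x : E) : rotGenL i j x = rotGen i j x := rfl

lemma rotGen_rotGen {i j : Fin n} (hij : i ≠ j) (x : E) :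
    rotGen i j (rotGen i j x) = -(x i • sgl i + x j • sgl j) := by
  have h1 : rotGen i j x j = -(x i) := by
    simp [rotGen, sgl, EuclideanSpace.single_apply, hij.symm]
  have h2 : rotGen i j x i = x j := by
    simp [rotGen, sgl, EuclideanSpace.single_apply, hij]
  calc rotGen i j (rotGen i j x) = rotGen i j x j • sgl i - rotGen i j x i • sgl j := rfl
  _ = -(x i • sgl i + x j • sgl j) := by rw [h1, h2]; module

lemma integral_rotgen2 {i j : Fin n} (hij : i ≠ j)
    (v1 : E → E →L[ℝ] ℝ) (v2 : E → E →L[ℝ] E →L[ℝ] ℝ)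
    (hd : ∀ y ∈ Ann n, HasFDerivAt v1 (v2 y) y)
    (hc1 : ContinuousOn v1 (Ann n)) (hc2 : ContinuousOn v2 (Ann n)) :
    ∫ x in Ann n,
      (v2 x (rotGen i j x) (rotGen i j x) - v1 x (x i • sgl i + x j • sgl j)) = 0 := by
  have key := integral_rotgen_eq_zero hij (fun y => v1 y (rotGenL i j y))
    (fun y => (v1 y).comp (rotGenL i j) + ((v2 y).flip) (rotGenL i j y))
    (fun y hy => (hd y hy).clm_apply ((rotGenL i j).hasFDerivAt))
    (by
      apply ContinuousOn.add
      · exact hc1.clm_comp continuousOn_const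
      · apply ContinuousOn.clm_apply
        · exact ((ContinuousLinearMap.flipₗᵢ ℝ (E) (E) ℝ).continuous.comp_continuousOn hc2)
        · exact (rotGenL i j).continuous.continuousOn)
  have : ∀ x : E,
      ((v1 x).comp (rotGenL i j) + ((v2 x).flip) (rotGenL i j x)) (rotGen i j x)
        = v2 x (rotGen i j x) (rotGen i j x) - v1 x (x i • sgl i + x j • sgl j) := by
    intro x
    simp only [ContinuousLinearMap.add_apply, ContinuousLinearMap.coe_comp', Function.comp_apply,
      ContinuousLinearMap.flip_apply, rotGenL_apply, rotGen_rotGen hij, map_neg]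
    ring
  calc ∫ x in Ann n,
        (v2 x (rotGen i j x) (rotGen i j x) - v1 x (x i • sgl i + x j • sgl j))
      = ∫ x in Ann n,
        ((v1 x).comp (rotGenL i j) + ((v2 x).flip) (rotGenL i j x)) (rotGen i j x) := by
        refine setIntegral_congr_fun measurableSet_Ann fun x _ => ?_
        rw [this x]
    _ = 0 := key

lemma norm_sq_eq (x : E) : ‖x‖ ^ 2 = ∑ k, x k ^ 2 := by
  rw [EuclideanSpace.norm_eq, Real.sq_sqrt (by positivity)]
  refine Finset.sum_congr rfl fun k _ => ?_
  rw [Real.norm_eq_abs, sq_abs]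

lemma lin_sum (L : E →L[ℝ] ℝ) (x : E) : L x = ∑ k, x k * L (sgl k) := by
  conv_lhs => rw [← sum_repr_single x]
  rw [map_sum]
  exact Finset.sum_congr rfl fun k _ => by rw [_root_.map_smul, smul_eq_mul]

lemma bilin_sum (B : E →L[ℝ] E →L[ℝ] ℝ) (x : E) :
    B x x = ∑ k, ∑ l, x k * x l * B (sgl k) (sgl l) := by
  have h1 : ∀ y : E, B x y = ∑ k, x k * B (sgl k) y := by
    intro y
    have h := lin_sum (B.flip y) x
    simpa [ContinuousLinearMap.flip_apply] using h
  rw [h1 x]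
  refine Finset.sum_congr rfl fun k _ => ?_
  rw [lin_sum (B (sgl k)) x, Finset.mul_sum]
  exact Finset.sum_congr rfl fun l _ => by ring

lemma sum_diag_univ (f : Fin n × Fin n → ℝ) :
    ∑ p ∈ (Finset.univ.diag : Finset (Fin n × Fin n)), f p = ∑ k, f (k, k) := by
  have himg : (Finset.univ.diag : Finset (Fin n × Fin n))
      = Finset.image (fun k => (k, k)) Finset.univ := by
    ext p
    simp only [Finset.mem_diag, Finset.mem_image, Finset.mem_univ, true_and]
    constructor
    · intro h
      obtain ⟨p1, p2⟩ := p
      simp only at h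
      subst h
      exact ⟨p1, rfl⟩
    · rintro ⟨k, rfl⟩; rfl
  rw [himg, Finset.sum_image (fun a _ b _ h => by simpa using (Prod.mk.injEq _ _ _ _ ▸ h).1)]

lemma sum_offDiag_eq (f : Fin n × Fin n → ℝ) :
    ∑ p ∈ (Finset.univ.offDiag : Finset (Fin n × Fin n)), f p
      = (∑ k, ∑ l, f (k, l)) - ∑ k, f (k, k) := by
  have h := Finset.sum_union (f := f) (Finset.disjoint_diag_offDiag
    (Finset.univ : Finset (Fin n)))
  rw [Finset.diag_union_offDiag] at h
  have hprod : ∑ p ∈ Finset.univ ×ˢ Finset.univ, f p = ∑ k, ∑ l, f (k, l) := by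
    rw [Finset.sum_product]
  rw [hprod, sum_diag_univ] at h
  linarith

lemma finset_algebra (a c : Fin n → ℝ) (b : Fin n → Fin n → ℝ) :
    (∑ k, ∑ l, (a l ^ 2 * b k k - a l * a k * b k l - a k * a l * b l k + a k ^ 2 * b l l
      - (a k * c k + a l * c l)))
      - (∑ k, (a k ^ 2 * b k k - a k * a k * b k k - a k * a k * b k k + a k ^ 2 * b k k
        - (a k * c k + a k * c k)))
    = 2 * ((∑ k, a k ^ 2) * (∑ k, b k k) - (∑ k, ∑ l, a k * a l * b k l)
        - ((n : ℝ) - 1) * ∑ k, a k * c k) := by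
  have hA1 : (∑ k, ∑ l, a l ^ 2 * b k k) = (∑ k, a k ^ 2) * ∑ k, b k k := by
    calc ∑ k, ∑ l, a l ^ 2 * b k k = ∑ k, (∑ l, a l ^ 2) * b k k :=
          Finset.sum_congr rfl fun k _ => (Finset.sum_mul _ _ _).symm
      _ = (∑ k, a k ^ 2) * ∑ k, b k k := by rw [← Finset.mul_sum]
  have hA2 : (∑ k, ∑ l, a l * a k * b k l) = ∑ k, ∑ l, a k * a l * b k l :=
    Finset.sum_congr rfl fun k _ => Finset.sum_congr rfl fun l _ => by ring
  have hA3 : (∑ k, ∑ l, a k * a l * b l k) = ∑ k, ∑ l, a k * a l * b k l := by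
    rw [Finset.sum_comm]
    exact Finset.sum_congr rfl fun k _ => Finset.sum_congr rfl fun l _ => by ring
  have hA4 : (∑ k, ∑ l, a k ^ 2 * b l l) = (∑ k, a k ^ 2) * ∑ k, b k k := by
    calc ∑ k, ∑ l, a k ^ 2 * b l l = ∑ k, a k ^ 2 * ∑ l, b l l :=
          Finset.sum_congr rfl fun k _ => (Finset.mul_sum _ _ _).symm
      _ = (∑ k, a k ^ 2) * ∑ k, b k k := by rw [← Finset.sum_mul]
  have hA5 : (∑ k, ∑ l, (a k * c k + a l * c l))
      = (n : ℝ) * (∑ k, a k * c k) + (n : ℝ) * (∑ k, a k * c k) := by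
    calc ∑ k, ∑ l, (a k * c k + a l * c l)
        = ∑ k, ((n : ℝ) * (a k * c k) + ∑ l, a l * c l) := by
          refine Finset.sum_congr rfl fun k _ => ?_
          rw [Finset.sum_add_distrib, Finset.sum_const, Finset.card_univ, Fintype.card_fin,
            nsmul_eq_mul]
      _ = (n : ℝ) * (∑ k, a k * c k) + (n : ℝ) * (∑ k, a k * c k) := by
          rw [Finset.sum_add_distrib, Finset.sum_const, Finset.card_univ, Fintype.card_fin,
            nsmul_eq_mul, ← Finset.mul_sum]
  have hdg : (∑ k, (a k ^ 2 * b k k - a k * a k * b k k - a k * a k * b k k + a k ^ 2 * b k k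
      - (a k * c k + a k * c k))) = -2 * ∑ k, a k * c k := by
    calc (∑ k, (a k ^ 2 * b k k - a k * a k * b k k - a k * a k * b k k + a k ^ 2 * b k k
        - (a k * c k + a k * c k))) = ∑ k, (-2) * (a k * c k) :=
          Finset.sum_congr rfl fun k _ => by ring
      _ = -2 * ∑ k, a k * c k := by rw [← Finset.mul_sum]
  have hexp : (∑ k, ∑ l, (a l ^ 2 * b k k - a l * a k * b k l - a k * a l * b l k
      + a k ^ 2 * b l l - (a k * c k + a l * c l)))
      = (∑ k, ∑ l, a l ^ 2 * b k k) - (∑ k, ∑ l, a l * a k * b k l)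
        - (∑ k, ∑ l, a k * a l * b l k) + (∑ k, ∑ l, a k ^ 2 * b l l)
        - (∑ k, ∑ l, (a k * c k + a l * c l)) := by
    simp only [Finset.sum_sub_distrib, Finset.sum_add_distrib]
  rw [hexp, hA1, hA2, hA3, hA4, hA5, hdg]
  ring

/-- The summed second-order rotation identity. -/
lemma main_identity
    (v1 : E → E →L[ℝ] ℝ) (v2 : E → E →L[ℝ] E →L[ℝ] ℝ)
    (hd : ∀ y ∈ Ann n, HasFDerivAt v1 (v2 y) y)
    (hc1 : ContinuousOn v1 (Ann n)) (hc2 : ContinuousOn v2 (Ann n)) :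
    ∫ x in Ann n,
      (‖x‖ ^ 2 * (∑ k, v2 x (sgl k) (sgl k)) - v2 x x x - ((n : ℝ) - 1) * v1 x x) = 0 := by
  classical
  have hcg : ∀ (i j : Fin n), Continuous (rotGen i j : E → E) := continuous_rotGen
  have hInt : ∀ p : Fin n × Fin n, IntegrableOn
      (fun x => v2 x (rotGen p.1 p.2 x) (rotGen p.1 p.2 x)
        - v1 x (x p.1 • sgl p.1 + x p.2 • sgl p.2)) (Ann n) volume := by
    intro p
    apply ContinuousOn.integrableOn_compact isCompact_Ann
    apply ContinuousOn.sub
    · exact (hc2.clm_apply (hcg p.1 p.2).continuousOn).clm_apply (hcg p.1 p.2).continuousOn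
    · exact hc1.clm_apply (((continuous_apply_E p.1).smul continuous_const).add
        ((continuous_apply_E p.2).smul continuous_const)).continuousOn
  have hzero : ∀ p ∈ (Finset.univ.offDiag : Finset (Fin n × Fin n)),
      (∫ x in Ann n, (v2 x (rotGen p.1 p.2 x) (rotGen p.1 p.2 x)
        - v1 x (x p.1 • sgl p.1 + x p.2 • sgl p.2))) = 0 := by
    intro p hp
    exact integral_rotgen2 (Finset.mem_offDiag.1 hp).2.2 v1 v2 hd hc1 hc2
  have hsum : ∫ x in Ann n, (∑ p ∈ (Finset.univ.offDiag : Finset (Fin n × Fin n)),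
      (v2 x (rotGen p.1 p.2 x) (rotGen p.1 p.2 x)
        - v1 x (x p.1 • sgl p.1 + x p.2 • sgl p.2))) = 0 := by
    rw [integral_finset_sum _ (fun p _ => hInt p)]
    exact Finset.sum_eq_zero hzero
  have hpoint : ∀ x : E,
      (∑ p ∈ (Finset.univ.offDiag : Finset (Fin n × Fin n)),
        (v2 x (rotGen p.1 p.2 x) (rotGen p.1 p.2 x)
          - v1 x (x p.1 • sgl p.1 + x p.2 • sgl p.2)))
      = 2 * (‖x‖ ^ 2 * (∑ k, v2 x (sgl k) (sgl k)) - v2 x x x - ((n : ℝ) - 1) * v1 x x) := by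
    intro x
    have hterm : ∀ p : Fin n × Fin n,
        v2 x (rotGen p.1 p.2 x) (rotGen p.1 p.2 x)
            - v1 x (x p.1 • sgl p.1 + x p.2 • sgl p.2)
          = x p.2 ^ 2 * v2 x (sgl p.1) (sgl p.1) - x p.2 * x p.1 * v2 x (sgl p.1) (sgl p.2)
            - x p.1 * x p.2 * v2 x (sgl p.2) (sgl p.1) + x p.1 ^ 2 * v2 x (sgl p.2) (sgl p.2)
            - (x p.1 * v1 x (sgl p.1) + x p.2 * v1 x (sgl p.2)) := by
      intro p
      simp only [rotGen, map_sub, map_add, _root_.map_smul, ContinuousLinearMap.sub_apply,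
        ContinuousLinearMap.add_apply, ContinuousLinearMap.smul_apply,
        ContinuousLinearMap.coe_smul', Pi.smul_apply, smul_eq_mul]
      ring
    rw [Finset.sum_congr rfl fun p _ => hterm p, sum_offDiag_eq]
    rw [norm_sq_eq x, bilin_sum (v2 x) x, lin_sum (v1 x) x]
    exact finset_algebra (fun k => x k) (fun k => v1 x (sgl k)) (fun k l => v2 x (sgl k) (sgl l))
  have h2int : ∫ x in Ann n, (2 * (‖x‖ ^ 2 * (∑ k, v2 x (sgl k) (sgl k)) - v2 x x x
      - ((n : ℝ) - 1) * v1 x x)) = 0 := by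
    rw [← hsum]
    exact setIntegral_congr_fun measurableSet_Ann fun x _ => (hpoint x).symm
  rw [MeasureTheory.integral_const_mul] at h2int
  have h2 : (2 : ℝ) ≠ 0 := by norm_num
  exact (mul_eq_zero.1 h2int).resolve_left h2

end SecondOrder



lemma my_antitoneOn {a : ℝ} (ha : 0 < a) (g g' : ℝ → ℝ)
    (hg : ∀ r, 0 < r → HasDerivAt g (g' r) r) (hng : ∀ r, a < r → g' r ≤ 0) :
    AntitoneOn g (Set.Ici a) := by
  refine antitoneOn_of_deriv_nonpos (convex_Ici a) ?_ ?_ ?_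
  · intro r hr
    exact ((hg r (lt_of_lt_of_le ha hr)).continuousAt).continuousWithinAt
  · intro r hr
    rw [interior_Ici] at hr
    exact ((hg r (lt_trans ha hr)).differentiableAt).differentiableWithinAt
  · intro r hr
    rw [interior_Ici] at hr
    rw [(hg r (lt_trans ha hr)).deriv]
    exact hng r hr

lemma my_monotoneOn {a : ℝ} (ha : 0 < a) (g g' : ℝ → ℝ)
    (hg : ∀ r, 0 < r → HasDerivAt g (g' r) r) (hng : ∀ r, a < r → 0 ≤ g' r) :
    MonotoneOn g (Set.Ici a) := by
  refine monotoneOn_of_deriv_nonneg (convex_Ici a) ?_ ?_ ?_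
  · intro r hr
    exact ((hg r (lt_of_lt_of_le ha hr)).continuousAt).continuousWithinAt
  · intro r hr
    rw [interior_Ici] at hr
    exact ((hg r (lt_trans ha hr)).differentiableAt).differentiableWithinAt
  · intro r hr
    rw [interior_Ici] at hr
    rw [(hg r (lt_trans ha hr)).deriv]
    exact hng r hr

/-- The 1-D ODE nonexistence argument. -/
lemma ode_contradiction (F F1 F2 : ℝ → ℝ) (κ p ε₀ : ℝ)
    (hκ : 0 < κ) (hp : κ * (p - 1) = 2) (hε₀ : 0 < ε₀)
    (hF : ∀ r, 0 < r → HasDerivAt F (F1 r) r)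
    (hF1 : ∀ r, 0 < r → HasDerivAt F1 (F2 r) r)
    (hFpos : ∀ r, 0 < r → 0 < F r)
    (hODE : ∀ r, 0 < r →
      r ^ 2 * F2 r + (2 * κ + 1) * r * F1 r + κ ^ 2 * F r + ε₀ * r ^ 2 * F r ^ p ≤ 0) :
    False := by
  have hp1 : 1 < p := by nlinarith
  have hp0 : 0 ≤ p := by linarith
  set w : ℝ → ℝ := fun r => r ^ κ * F r with hw_def
  set w1 : ℝ → ℝ := fun r => κ * r ^ (κ - 1) * F r + r ^ κ * F1 r with hw1_def
  set w1' : ℝ → ℝ := fun r =>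
    (κ * ((κ - 1) * r ^ (κ - 2)) * F r + κ * r ^ (κ - 1) * F1 r)
      + (κ * r ^ (κ - 1) * F1 r + r ^ κ * F2 r) with hw1'_def
  have hw : ∀ r, 0 < r → HasDerivAt w (w1 r) r := by
    intro r hr
    have h1 := (Real.hasDerivAt_rpow_const (x := r) (p := κ) (Or.inl hr.ne')).mul (hF r hr)
    exact h1
  have hw1 : ∀ r, 0 < r → HasDerivAt w1 (w1' r) r := by
    intro r hr
    have ha : HasDerivAt (fun r : ℝ => κ * r ^ (κ - 1) * F r)
        (κ * ((κ - 1) * r ^ (κ - 1 - 1)) * F r + κ * r ^ (κ - 1) * F1 r) r := by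
      have h := (((Real.hasDerivAt_rpow_const (x := r) (p := κ - 1)
        (Or.inl hr.ne')).const_mul κ).mul (hF r hr))
      exact h
    have hb : HasDerivAt (fun r : ℝ => r ^ κ * F1 r)
        (κ * r ^ (κ - 1) * F1 r + r ^ κ * F2 r) r := by
      have h := (Real.hasDerivAt_rpow_const (x := r) (p := κ)
        (Or.inl hr.ne')).mul (hF1 r hr)
      exact h
    have hco := ha.add hb
    have he : κ - 1 - 1 = κ - 2 := by ring
    rw [he] at hco
    exact hco
  have hwpos : ∀ r, 0 < r → 0 < w r := fun r hr =>
    mul_pos (Real.rpow_pos_of_pos hr κ) (hFpos r hr)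
  set φ : ℝ → ℝ := fun r => r * w1 r with hφ_def
  set φD : ℝ → ℝ := fun r => w1 r + r * w1' r with hφD_def
  have hφ : ∀ r, 0 < r → HasDerivAt φ (φD r) r := by
    intro r hr
    have h := (hasDerivAt_id r).mul (hw1 r hr)
    simp only [one_mul] at h
    exact h
  have hφD_le : ∀ r, 0 < r → φD r ≤ -(ε₀ * w r ^ p / r) := by
    intro r hr
    have e1 : r ^ (κ - 1) = r ^ (κ - 2) * r := by
      rw [← Real.rpow_add_one hr.ne' (κ - 2)]
      congr 1
      ring
    have e2 : r ^ κ = r ^ (κ - 2) * r * r := by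
      rw [← Real.rpow_add_one hr.ne' (κ - 2), ← Real.rpow_add_one hr.ne' (κ - 2 + 1)]
      congr 1
      ring
    have hφD_eq : φD r = r ^ (κ - 2) * r
        * (κ ^ 2 * F r + (2 * κ + 1) * r * F1 r + r ^ 2 * F2 r) := by
      simp only [hφD_def, hw1_def, hw1'_def]
      rw [e2, e1]
      ring
    have hwp : w r ^ p = r ^ (κ + 2) * F r ^ p := by
      have hkp : κ * p = κ + 2 := by linear_combination hp
      simp only [hw_def]
      rw [Real.mul_rpow (Real.rpow_pos_of_pos hr κ).le (hFpos r hr).le,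
        ← Real.rpow_mul hr.le, hkp]
    have e3 : r ^ (κ + 2) = r ^ (κ - 2) * r * r * r * r := by
      rw [← Real.rpow_add_one hr.ne' (κ - 2), ← Real.rpow_add_one hr.ne' (κ - 2 + 1),
        ← Real.rpow_add_one hr.ne' (κ - 2 + 1 + 1), ← Real.rpow_add_one hr.ne' (κ - 2 + 1 + 1 + 1)]
      congr 1
      ring
    have hA : κ ^ 2 * F r + (2 * κ + 1) * r * F1 r + r ^ 2 * F2 r
        ≤ -(ε₀ * r ^ 2 * F r ^ p) := by linarith [hODE r hr]
    have hXr : (0 : ℝ) ≤ r ^ (κ - 2) * r := by positivity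
    have hmul := mul_le_mul_of_nonneg_left hA hXr
    calc φD r = r ^ (κ - 2) * r * (κ ^ 2 * F r + (2 * κ + 1) * r * F1 r + r ^ 2 * F2 r) :=
        hφD_eq
      _ ≤ r ^ (κ - 2) * r * (-(ε₀ * r ^ 2 * F r ^ p)) := hmul
      _ = -(ε₀ * w r ^ p / r) := by
          rw [hwp, e3]
          field_simp
  -- Step A : φ is nonnegative on (0, ∞)
  have hφ_nonneg : ∀ r, 0 < r → 0 ≤ φ r := by
    intro r₀ hr₀
    by_contra hneg
    push_neg at hneg
    set a := -φ r₀ with ha_def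
    have ha : 0 < a := by rw [ha_def]; linarith
    have hφanti : AntitoneOn φ (Set.Ici r₀) := by
      refine my_antitoneOn hr₀ φ φD hφ fun r hr => ?_
      have hrpos : 0 < r := lt_trans hr₀ hr
      refine le_trans (hφD_le r hrpos) ?_
      have : 0 ≤ ε₀ * w r ^ p / r :=
        div_nonneg (mul_nonneg hε₀.le (Real.rpow_nonneg (hwpos r hrpos).le p)) hrpos.le
      linarith
    have hw1le : ∀ r, r₀ ≤ r → w1 r ≤ -a / r := by
      intro r hrr
      have hrpos : 0 < r := lt_of_lt_of_le hr₀ hrr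
      have h1 : φ r ≤ φ r₀ := hφanti Set.self_mem_Ici hrr hrr
      have h2 : r * w1 r ≤ -a := by rw [ha_def]; simp only [hφ_def] at h1 ⊢; linarith
      rw [le_div_iff₀ hrpos]
      linarith [h2, mul_comm r (w1 r)]
    have hψ : ∀ r, 0 < r → HasDerivAt (fun r => w r + a * Real.log r)
        (w1 r + a * r⁻¹) r := fun r hr =>
      (hw r hr).add ((Real.hasDerivAt_log hr.ne').const_mul a)
    have hψanti : AntitoneOn (fun r => w r + a * Real.log r) (Set.Ici r₀) := by
      refine my_antitoneOn hr₀ _ _ hψ fun r hr => ?_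
      have hrpos : 0 < r := lt_trans hr₀ hr
      have h1 := hw1le r (le_of_lt hr)
      have h2 : a * r⁻¹ = a / r := by rw [div_eq_mul_inv]
      have h3 : -a / r = -(a / r) := by ring
      rw [h2]
      rw [h3] at h1
      linarith
    set R := Real.exp (Real.log r₀ + w r₀ / a + 1) with hR_def
    have hRgt : r₀ < R := by
      conv_lhs => rw [← Real.exp_log hr₀]
      apply Real.exp_lt_exp.2
      have h1 : 0 < w r₀ / a := div_pos (hwpos r₀ hr₀) ha
      linarith
    have hψle := hψanti Set.self_mem_Ici (le_of_lt hRgt) (le_of_lt hRgt)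
    simp only [] at hψle
    have hlogR : Real.log R = Real.log r₀ + w r₀ / a + 1 := Real.log_exp _
    have hwR : 0 < w R := hwpos R (lt_trans hr₀ hRgt)
    rw [hlogR] at hψle
    have hfrac : a * (w r₀ / a) = w r₀ := by field_simp
    nlinarith [hψle, hfrac, hwR, ha]
  -- Step B : w1 is nonnegative on (0, ∞)
  have hw1_nonneg : ∀ r, 0 < r → 0 ≤ w1 r := by
    intro r hr
    by_contra h
    push_neg at h
    have h1 := hφ_nonneg r hr
    simp only [hφ_def] at h1
    nlinarith
  -- Step C : final contradiction
  have hmono : MonotoneOn w (Set.Ici 1) :=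
    my_monotoneOn one_pos w w1 hw fun r hr => hw1_nonneg r (lt_trans one_pos hr)
  have hm : 0 < w 1 := hwpos 1 one_pos
  have hwge : ∀ r, 1 ≤ r → w 1 ≤ w r := fun r hr => hmono Set.self_mem_Ici hr hr
  have hχ : ∀ r, 0 < r → HasDerivAt (fun r => φ r + (ε₀ * w 1 ^ p) * Real.log r)
      (φD r + (ε₀ * w 1 ^ p) * r⁻¹) r := fun r hr =>
    (hφ r hr).add ((Real.hasDerivAt_log hr.ne').const_mul _)
  have hχanti : AntitoneOn (fun r => φ r + (ε₀ * w 1 ^ p) * Real.log r) (Set.Ici 1) := by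
    refine my_antitoneOn one_pos _ _ hχ fun r hr => ?_
    have hrpos : 0 < r := lt_trans one_pos hr
    have h1 := hφD_le r hrpos
    have h2 : w 1 ^ p ≤ w r ^ p :=
      Real.rpow_le_rpow hm.le (hwge r (le_of_lt hr)) hp0
    have h3 : ε₀ * w 1 ^ p / r ≤ ε₀ * w r ^ p / r := by gcongr
    have h4 : (ε₀ * w 1 ^ p) * r⁻¹ = ε₀ * w 1 ^ p / r := by rw [div_eq_mul_inv]
    rw [h4]
    linarith
  set R := Real.exp (φ 1 / (ε₀ * w 1 ^ p) + 1) with hR_def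
  have hden : 0 < ε₀ * w 1 ^ p := by positivity
  have hRgt : 1 < R := by
    rw [show (1 : ℝ) = Real.exp 0 by rw [Real.exp_zero]]
    apply Real.exp_lt_exp.2
    have h1 : 0 ≤ φ 1 / (ε₀ * w 1 ^ p) := div_nonneg (hφ_nonneg 1 one_pos) hden.le
    linarith
  have hχle := hχanti Set.self_mem_Ici (le_of_lt hRgt) (le_of_lt hRgt)
  simp only [] at hχle
  have hlogR : Real.log R = φ 1 / (ε₀ * w 1 ^ p) + 1 := Real.log_exp _
  rw [hlogR, Real.log_one] at hχle
  have hfrac : (ε₀ * w 1 ^ p) * (φ 1 / (ε₀ * w 1 ^ p)) = φ 1 := by field_simp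
  have hφR := hφ_nonneg R (lt_trans one_pos hRgt)
  nlinarith [hχle, hfrac, hφR, hden]







lemma volume_Ann_pos (hn0 : 0 < n) : 0 < (volume : Measure E) (Ann n) := by
  have i0 : Fin n := ⟨0, hn0⟩
  set cpt : E := (3/2 : ℝ) • sgl i0 with hc
  have hc_norm : ‖cpt‖ = 3/2 := by
    rw [hc, norm_smul, EuclideanSpace.norm_single]
    simp [Real.norm_eq_abs]
  have hsub : ball cpt (1/4) ⊆ Ann n := by
    intro y hy
    rw [mem_ball, dist_eq_norm] at hy
    have habs := abs_le.1 (abs_norm_sub_norm_le y cpt)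
    constructor
    · rw [hc_norm] at habs; linarith [habs.1]
    · rw [hc_norm] at habs; linarith [habs.2]
  calc (0 : ℝ≥0∞) < volume (ball cpt (1/4)) := measure_ball_pos volume cpt (by norm_num)
    _ ≤ volume (Ann n) := measure_mono hsub

lemma hasDerivAt_setIntegral (w : E → ℝ) (w' : E → E →L[ℝ] ℝ)
    (hd : ∀ y : E, y ≠ 0 → HasFDerivAt w (w' y) y)
    (hcw : ContinuousOn w {y : E | y ≠ 0})
    (hcw' : ContinuousOn w' {y : E | y ≠ 0})
    {r₀ : ℝ} (hr₀ : 0 < r₀) :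
    HasDerivAt (fun r => ∫ x in Ann n, w (r • x)) (∫ x in Ann n, w' (r₀ • x) x) r₀ := by
  set K : Set E := {y : E | r₀ / 2 ≤ ‖y‖ ∧ ‖y‖ ≤ 3 * r₀} with hK_def
  have hKcpt : IsCompact K := by
    have h1 : K = (fun y : E => ‖y‖) ⁻¹' (Icc (r₀/2) (3*r₀)) := rfl
    have hcl : IsClosed K := h1 ▸ isClosed_Icc.preimage continuous_norm
    refine (isCompact_closedBall (0 : E) (3*r₀)).of_isClosed_subset hcl ?_
    intro x hx
    simpa [mem_closedBall, dist_eq_norm] using hx.2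
  have hKsub : K ⊆ {y : E | y ≠ 0} := by
    intro y hy h0
    rw [h0] at hy
    have h1 := hy.1
    simp only [norm_zero] at h1
    linarith
  obtain ⟨C, hC⟩ := hKcpt.exists_bound_of_continuousOn (hcw'.mono hKsub)
  have htball : ∀ t ∈ ball r₀ (r₀/2), r₀/2 < t ∧ t < 3*r₀/2 := by
    intro t ht
    rw [mem_ball, Real.dist_eq, abs_lt] at ht
    constructor <;> linarith [ht.1, ht.2]
  have hmemK : ∀ t ∈ ball r₀ (r₀/2), ∀ x ∈ Ann n, t • x ∈ K := by
    intro t ht x hx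
    obtain ⟨ht1, ht2⟩ := htball t ht
    have htpos : 0 < t := lt_trans (by linarith) ht1
    have hnorm : ‖t • x‖ = t * ‖x‖ := by
      rw [norm_smul, Real.norm_eq_abs, abs_of_pos htpos]
    constructor
    · rw [hK_def] at *; show r₀ / 2 ≤ ‖t • x‖; rw [hnorm]; nlinarith [hx.1]
    · show ‖t • x‖ ≤ 3 * r₀; rw [hnorm]; nlinarith [hx.2]
  have hne : ∀ t ∈ ball r₀ (r₀/2), ∀ x ∈ Ann n, t • x ≠ 0 :=
    fun t ht x hx => hKsub (hmemK t ht x hx)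
  have hr₀ball : r₀ ∈ ball r₀ (r₀/2) := mem_ball_self (by linarith)
  have hF_meas : ∀ᶠ t in 𝓝 r₀, AEStronglyMeasurable (fun x => w (t • x))
      ((volume : Measure E).restrict (Ann n)) := by
    refine Filter.eventually_of_mem (Metric.ball_mem_nhds r₀ (by linarith : (0:ℝ) < r₀/2)) ?_
    intro t ht
    refine (hcw.comp (continuous_const_smul t).continuousOn ?_).aestronglyMeasurable
      measurableSet_Ann
    exact fun x hx => hne t ht x hx
  have hF_int : Integrable (fun x => w (r₀ • x)) ((volume : Measure E).restrict (Ann n)) := by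
    apply ContinuousOn.integrableOn_compact isCompact_Ann
    exact hcw.comp (continuous_const_smul r₀).continuousOn fun x hx => hne r₀ hr₀ball x hx
  have hF'_meas : AEStronglyMeasurable (fun x => w' (r₀ • x) x)
      ((volume : Measure E).restrict (Ann n)) := by
    refine (ContinuousOn.clm_apply ?_ continuousOn_id).aestronglyMeasurable measurableSet_Ann
    exact hcw'.comp (continuous_const_smul r₀).continuousOn fun x hx => hne r₀ hr₀ball x hx
  have h_bound : ∀ᵐ x ∂((volume : Measure E).restrict (Ann n)),
      ∀ t ∈ ball r₀ (r₀/2), ‖w' (t • x) x‖ ≤ (max C 0) * 2 := by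
    refine (ae_restrict_iff' measurableSet_Ann).2 (Filter.Eventually.of_forall fun x hx => ?_)
    intro t ht
    calc ‖w' (t • x) x‖ ≤ ‖w' (t • x)‖ * ‖x‖ := (w' (t • x)).le_opNorm x
      _ ≤ (max C 0) * 2 := by
          apply mul_le_mul _ hx.2 (norm_nonneg x) (le_max_right C 0)
          exact le_trans (hC _ (hmemK t ht x hx)) (le_max_left C 0)
  have h_diff : ∀ᵐ x ∂((volume : Measure E).restrict (Ann n)),
      ∀ t ∈ ball r₀ (r₀/2), HasDerivAt (fun t => w (t • x)) (w' (t • x) x) t := by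
    refine (ae_restrict_iff' measurableSet_Ann).2 (Filter.Eventually.of_forall fun x hx => ?_)
    intro t ht
    have h1 : HasDerivAt (fun s : ℝ => s • x) x t := by
      simpa using (hasDerivAt_id t).smul_const x
    exact (hd _ (hne t ht x hx)).comp_hasDerivAt t h1
  exact (hasDerivAt_integral_of_dominated_loc_of_deriv_le
    (μ := (volume : Measure E).restrict (Ann n)) (x₀ := r₀)
    (F := fun t x => w (t • x)) (F' := fun t x => w' (t • x) x)
    (bound := fun _ => (max C 0) * 2)
    (Metric.ball_mem_nhds r₀ (by linarith : (0:ℝ) < r₀/2))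
    hF_meas hF_int hF'_meas h_bound (integrable_const _) h_diff).2







lemma no_solution (hn : 3 ≤ n) (c : ℝ) (hc : ((n : ℝ) - 2) ^ 2 / 4 ≤ c)
    (u : E → ℝ)
    (hu : ContDiffOn ℝ (⊤ : ℕ∞) u {x : E | x ≠ 0})
    (hupos : ∀ x : E, x ≠ 0 → 0 < u x)
    (hueq : ∀ x : E, x ≠ 0 →
      (∑ k, fderiv ℝ (fderiv ℝ u) x (sgl k) (sgl k)) + (c / ‖x‖ ^ 2) * u x
        + u x ^ (((n : ℝ) + 2) / ((n : ℝ) - 2)) = 0) : False := by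
  classical
  have hn0 : 0 < n := by omega
  have hn3 : (3 : ℝ) ≤ (n : ℝ) := by exact_mod_cast hn
  have hn2 : (0 : ℝ) < (n : ℝ) - 2 := by linarith
  set p : ℝ := ((n : ℝ) + 2) / ((n : ℝ) - 2) with hp_def
  set κ : ℝ := ((n : ℝ) - 2) / 2 with hκ_def
  have hκpos : 0 < κ := by rw [hκ_def]; linarith
  have hκp : κ * (p - 1) = 2 := by
    rw [hκ_def, hp_def]
    field_simp
    ring
  have hp1 : 1 < p := by nlinarith [hκp, hκpos]
  -- derivatives of u
  set S : Set E := {x : E | x ≠ 0} with hS_def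
  have hSopen : IsOpen S := isOpen_ne
  set U1 : E → E →L[ℝ] ℝ := fderiv ℝ u with hU1_def
  set U2 : E → E →L[ℝ] E →L[ℝ] ℝ := fderiv ℝ (fderiv ℝ u) with hU2_def
  have hCAt : ∀ y : E, y ≠ 0 → ContDiffAt ℝ (⊤ : ℕ∞) u y := fun y hy =>
    hu.contDiffAt (hSopen.mem_nhds hy)
  have hCAt1 : ∀ y : E, y ≠ 0 → ContDiffAt ℝ (⊤ : ℕ∞) U1 y := fun y hy =>
    (hCAt y hy).fderiv_right (by simp)
  have hCAt2 : ∀ y : E, y ≠ 0 → ContDiffAt ℝ (⊤ : ℕ∞) U2 y := fun y hy =>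
    (hCAt1 y hy).fderiv_right (by simp)
  have hU1d : ∀ y : E, y ≠ 0 → HasFDerivAt u (U1 y) y := fun y hy =>
    ((hCAt y hy).differentiableAt (by simp)).hasFDerivAt
  have hU2d : ∀ y : E, y ≠ 0 → HasFDerivAt U1 (U2 y) y := fun y hy =>
    ((hCAt1 y hy).differentiableAt (by simp)).hasFDerivAt
  have hcu : ContinuousOn u S := hu.continuousOn
  have hcU1 : ContinuousOn U1 S := fun y hy => ((hCAt1 y hy).continuousAt).continuousWithinAt
  have hcU2 : ContinuousOn U2 S := fun y hy => ((hCAt2 y hy).continuousAt).continuousWithinAt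
  -- the PDE rearranged
  have hPDE : ∀ y : E, y ≠ 0 →
      (∑ k, U2 y (sgl k) (sgl k)) = -((c / ‖y‖ ^ 2) * u y) - u y ^ p := by
    intro y hy
    have h := hueq y hy
    rw [hU2_def]
    linarith
  -- basic membership facts
  have hsm : ∀ (r : ℝ), 0 < r → ∀ x, x ∈ Ann n → r • x ≠ 0 := fun r hr x hx =>
    smul_ne_zero hr.ne' (Ann_ne_zero_mem hx)
  have hcomp : ∀ (r : ℝ), 0 < r → ∀ (g : E → ℝ), ContinuousOn g S →
      ContinuousOn (fun x => g (r • x)) (Ann n) := fun r hr g hg =>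
    hg.comp (continuous_const_smul r).continuousOn fun x hx => hsm r hr x hx
  -- the radial averages
  set F : ℝ → ℝ := fun r => ∫ x in Ann n, u (r • x) with hF_def
  set F1 : ℝ → ℝ := fun r => ∫ x in Ann n, U1 (r • x) x with hF1_def
  set F2 : ℝ → ℝ := fun r => ∫ x in Ann n, U2 (r • x) x x with hF2_def
  set Q : ℝ → ℝ := fun r => ∫ x in Ann n, ‖x‖ ^ 2 * u (r • x) ^ p with hQ_def
  -- integrability of the pieces
  have hcU1r : ∀ (r : ℝ), 0 < r → ContinuousOn (fun x => U1 (r • x)) (Ann n) := fun r hr =>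
    hcU1.comp (continuous_const_smul r).continuousOn fun x hx => hsm r hr x hx
  have hcU2r : ∀ (r : ℝ), 0 < r → ContinuousOn (fun x => U2 (r • x)) (Ann n) := fun r hr =>
    hcU2.comp (continuous_const_smul r).continuousOn fun x hx => hsm r hr x hx
  have I1 : ∀ (r : ℝ), 0 < r → IntegrableOn (fun x => u (r • x)) (Ann n) volume := fun r hr =>
    (hcomp r hr u hcu).integrableOn_compact isCompact_Ann
  have Iup : ∀ (r : ℝ), 0 < r →
      IntegrableOn (fun x => u (r • x) ^ p) (Ann n) volume := by
    intro r hr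
    refine ContinuousOn.integrableOn_compact isCompact_Ann ?_
    exact (hcomp r hr u hcu).rpow_const fun x hx =>
      Or.inl (ne_of_gt (hupos _ (hsm r hr x hx)))
  have I2 : ∀ (r : ℝ), 0 < r →
      IntegrableOn (fun x => ‖x‖ ^ 2 * u (r • x) ^ p) (Ann n) volume := by
    intro r hr
    refine ContinuousOn.integrableOn_compact isCompact_Ann ?_
    exact ((continuous_norm.pow 2).continuousOn).mul
      ((hcomp r hr u hcu).rpow_const fun x hx =>
        Or.inl (ne_of_gt (hupos _ (hsm r hr x hx))))
  have I3 : ∀ (r : ℝ), 0 < r →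
      IntegrableOn (fun x => U2 (r • x) x x) (Ann n) volume := by
    intro r hr
    refine ContinuousOn.integrableOn_compact isCompact_Ann ?_
    exact ((hcU2r r hr).clm_apply continuousOn_id).clm_apply continuousOn_id
  have I4 : ∀ (r : ℝ), 0 < r →
      IntegrableOn (fun x => U1 (r • x) x) (Ann n) volume := by
    intro r hr
    refine ContinuousOn.integrableOn_compact isCompact_Ann ?_
    exact (hcU1r r hr).clm_apply continuousOn_id
  -- positivity of F
  have hFpos : ∀ r, 0 < r → 0 < F r := by
    intro r hr
    have hnn : 0 ≤ᵐ[(volume : Measure E).restrict (Ann n)] fun x => u (r • x) :=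
      (ae_restrict_iff' measurableSet_Ann).2
        (Filter.Eventually.of_forall fun x hx => (hupos _ (hsm r hr x hx)).le)
    refine (setIntegral_pos_iff_support_of_nonneg_ae hnn (I1 r hr)).2 ?_
    have hsub : Ann n ⊆ Function.support (fun x => u (r • x)) ∩ Ann n := fun x hx =>
      ⟨ne_of_gt (hupos _ (hsm r hr x hx)), hx⟩
    exact lt_of_lt_of_le (volume_Ann_pos hn0) (measure_mono hsub)
  -- derivative of F
  have hFd : ∀ r, 0 < r → HasDerivAt F (F1 r) r := fun r hr =>
    hasDerivAt_setIntegral u U1 hU1d hcu hcU1 hr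
  -- derivative of F1 (via G1)
  have hF1d : ∀ r, 0 < r → HasDerivAt F1 (F2 r) r := by
    intro r hr
    set w₁ : E → ℝ := fun y => U1 y y with hw₁_def
    set w₁' : E → E →L[ℝ] ℝ := fun y =>
      (U1 y).comp (ContinuousLinearMap.id ℝ (EuclideanSpace ℝ (Fin n))) + (U2 y).flip y
      with hw₁'_def
    have hw₁d : ∀ y : E, y ≠ 0 → HasFDerivAt w₁ (w₁' y) y := fun y hy =>
      (hU2d y hy).clm_apply (hasFDerivAt_id y)
    have hcw₁ : ContinuousOn w₁ S := hcU1.clm_apply continuousOn_id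
    have hcw₁' : ContinuousOn w₁' S := by
      apply ContinuousOn.add
      · exact hcU1.clm_comp continuousOn_const
      · exact (((ContinuousLinearMap.flipₗᵢ ℝ (EuclideanSpace ℝ (Fin n))
          (EuclideanSpace ℝ (Fin n)) ℝ).continuous.comp_continuousOn hcU2).clm_apply
          continuousOn_id)
    have hG1d : HasDerivAt (fun s => ∫ x in Ann n, w₁ (s • x))
        (∫ x in Ann n, w₁' (r • x) x) r :=
      hasDerivAt_setIntegral w₁ w₁' hw₁d hcw₁ hcw₁' hr
    have hval : (∫ x in Ann n, w₁' (r • x) x)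
        = F1 r + r * F2 r := by
      have hcongr : ∀ x ∈ Ann n, w₁' (r • x) x
          = U1 (r • x) x + r * U2 (r • x) x x := by
        intro x hx
        simp only [hw₁'_def, ContinuousLinearMap.add_apply, ContinuousLinearMap.coe_comp',
          Function.comp_apply, ContinuousLinearMap.coe_id', id_eq,
          ContinuousLinearMap.flip_apply, ContinuousLinearMap.smul_apply,
          _root_.map_smul, smul_eq_mul]
      rw [setIntegral_congr_fun measurableSet_Ann hcongr]
      rw [integral_add (I4 r hr) ((I3 r hr).const_mul r)]
      rw [MeasureTheory.integral_const_mul]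
    have hG1eq : ∀ s : ℝ, (∫ x in Ann n, w₁ (s • x)) = s * F1 s := by
      intro s
      have hcongr : ∀ x ∈ Ann n, w₁ (s • x) = s * U1 (s • x) x := by
        intro x hx
        simp only [hw₁_def, _root_.map_smul, smul_eq_mul]
      rw [setIntegral_congr_fun measurableSet_Ann hcongr, MeasureTheory.integral_const_mul]
    have hH : HasDerivAt (fun s : ℝ => s⁻¹ * (s * F1 s))
        (-(r ^ 2)⁻¹ * (r * F1 r) + r⁻¹ * (F1 r + r * F2 r)) r := by
      have h0 := (hasDerivAt_inv hr.ne').mul hG1d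
      rw [hval] at h0
      have hfun : (fun s : ℝ => s⁻¹ * (∫ x in Ann n, w₁ (s • x)))
          = fun s => s⁻¹ * (s * F1 s) := funext fun s => by rw [hG1eq s]
      change HasDerivAt (fun s : ℝ => s⁻¹ * (∫ x in Ann n, w₁ (s • x))) _ r at h0
      rw [hfun, hG1eq r] at h0
      exact h0
    have hev : F1 =ᶠ[𝓝 r] fun s : ℝ => s⁻¹ * (s * F1 s) := by
      filter_upwards [eventually_gt_nhds hr] with s hs
      field_simp
    have hfin := hH.congr_of_eventuallyEq hev
    have hDval : -(r ^ 2)⁻¹ * (r * F1 r) + r⁻¹ * (F1 r + r * F2 r) = F2 r := by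
      field_simp
      ring
    rw [hDval] at hfin
    exact hfin
  -- the main (averaged) identity for each r > 0
  have hIden : ∀ r, 0 < r →
      (-c) * F r + (-(r ^ 2)) * Q r + (-(r ^ 2)) * F2 r + (-(((n : ℝ) - 1) * r)) * F1 r
        = 0 := by
    intro r hr
    set A : E →L[ℝ] E := r • ContinuousLinearMap.id ℝ (EuclideanSpace ℝ (Fin n)) with hA_def
    set v1 : E → E →L[ℝ] ℝ := fun x => r • U1 (r • x) with hv1_def
    set v2 : E → E →L[ℝ] E →L[ℝ] ℝ := fun x => (r ^ 2) • U2 (r • x) with hv2_def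
    have hd : ∀ y ∈ Ann n, HasFDerivAt v1 (v2 y) y := by
      intro x hx
      have hxne := hsm r hr x hx
      have hA_deriv : HasFDerivAt (fun x : E => r • x) A x := by
        exact (hasFDerivAt_id x).const_smul r
      have h0 : HasFDerivAt (fun x : E => U1 (r • x)) ((U2 (r • x)).comp A) x :=
        (hU2d _ hxne).comp x hA_deriv
      have h1 := h0.const_smul r
      have heq2 : r • ((U2 (r • x)).comp A) = (r ^ 2) • U2 (r • x) := by
        refine ContinuousLinearMap.ext fun w => ContinuousLinearMap.ext fun w' => ?_
        simp only [hA_def, ContinuousLinearMap.smul_apply, ContinuousLinearMap.coe_comp',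
          Function.comp_apply, ContinuousLinearMap.coe_smul', Pi.smul_apply,
          ContinuousLinearMap.coe_id', id_eq, _root_.map_smul, smul_eq_mul]
        ring
      rw [heq2] at h1
      exact h1
    have hc1 : ContinuousOn v1 (Ann n) := ((hcU1r r hr).const_smul r)
    have hc2 : ContinuousOn v2 (Ann n) := ((hcU2r r hr).const_smul (r ^ 2))
    have hmain := main_identity v1 v2 hd hc1 hc2
    have hcongr : ∀ x ∈ Ann n,
        ‖x‖ ^ 2 * (∑ k, v2 x (sgl k) (sgl k)) - v2 x x x - ((n : ℝ) - 1) * v1 x x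
        = (-c) * u (r • x) + (-(r ^ 2)) * (‖x‖ ^ 2 * u (r • x) ^ p)
          + (-(r ^ 2)) * (U2 (r • x) x x) + (-(((n : ℝ) - 1) * r)) * (U1 (r • x) x) := by
      intro x hx
      have hxne := hsm r hr x hx
      have hx1 : (1 : ℝ) ≤ ‖x‖ := hx.1
      have hxnorm : ‖x‖ ≠ 0 := by positivity
      have hsum : ∑ k, v2 x (sgl k) (sgl k) = r ^ 2 * ∑ k, U2 (r • x) (sgl k) (sgl k) := by
        rw [Finset.mul_sum]
        refine Finset.sum_congr rfl fun k _ => ?_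
        simp [hv2_def, smul_eq_mul]
      have hv2xx : v2 x x x = r ^ 2 * U2 (r • x) x x := by simp [hv2_def, smul_eq_mul]
      have hv1xx : v1 x x = r * U1 (r • x) x := by simp [hv1_def, smul_eq_mul]
      rw [hsum, hPDE (r • x) hxne, hv2xx, hv1xx]
      have hnrm : ‖r • x‖ ^ 2 = r ^ 2 * ‖x‖ ^ 2 := by
        rw [norm_smul, Real.norm_eq_abs, abs_of_pos hr, mul_pow]
      rw [hnrm]
      field_simp
      ring
    rw [setIntegral_congr_fun measurableSet_Ann hcongr] at hmain
    have J1 : Integrable (fun x => (-c) * u (r • x))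
        ((volume : Measure E).restrict (Ann n)) := (I1 r hr).const_mul _
    have J2 : Integrable (fun x => (-(r ^ 2)) * (‖x‖ ^ 2 * u (r • x) ^ p))
        ((volume : Measure E).restrict (Ann n)) := (I2 r hr).const_mul _
    have J3 : Integrable (fun x => (-(r ^ 2)) * (U2 (r • x) x x))
        ((volume : Measure E).restrict (Ann n)) := (I3 r hr).const_mul _
    have J4 : Integrable (fun x => (-(((n : ℝ) - 1) * r)) * (U1 (r • x) x))
        ((volume : Measure E).restrict (Ann n)) := (I4 r hr).const_mul _
    have J12 : Integrable (fun x => (-c) * u (r • x)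
        + (-(r ^ 2)) * (‖x‖ ^ 2 * u (r • x) ^ p))
        ((volume : Measure E).restrict (Ann n)) := J1.add J2
    have J123 : Integrable (fun x => (-c) * u (r • x)
        + (-(r ^ 2)) * (‖x‖ ^ 2 * u (r • x) ^ p) + (-(r ^ 2)) * (U2 (r • x) x x))
        ((volume : Measure E).restrict (Ann n)) := J12.add J3
    rw [integral_add J123 J4, integral_add J12 J3,
      integral_add J1 J2, MeasureTheory.integral_const_mul, MeasureTheory.integral_const_mul,
      MeasureTheory.integral_const_mul, MeasureTheory.integral_const_mul] at hmain
    exact hmain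
  -- Jensen inequality for the nonlinear term
  set Vr : ℝ := ((volume : Measure E) (Ann n)).toReal with hVr_def
  have hVrpos : 0 < Vr :=
    ENNReal.toReal_pos (ne_of_gt (volume_Ann_pos hn0)) isCompact_Ann.measure_lt_top.ne
  have hQle : ∀ r, 0 < r → (Vr⁻¹ ^ p * Vr) * F r ^ p ≤ Q r := by
    intro r hr
    haveI : NeZero ((volume : Measure E).restrict (Ann n)) := by
      constructor
      intro h
      have h1 := congrArg (fun m : Measure E => m Set.univ) h
      simp only [Measure.restrict_apply_univ, Measure.coe_zero, Pi.zero_apply] at h1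
      exact absurd h1 (ne_of_gt (volume_Ann_pos hn0))
    have hgc : ContinuousOn (fun t : ℝ => t ^ p) (Ici 0) := fun t ht =>
      (Real.continuousAt_rpow_const t p (Or.inr (by linarith))).continuousWithinAt
    have hfs : ∀ᵐ x ∂((volume : Measure E).restrict (Ann n)), u (r • x) ∈ Ici (0 : ℝ) :=
      (ae_restrict_iff' measurableSet_Ann).2 (Filter.Eventually.of_forall fun x hx =>
        mem_Ici.2 (hupos _ (hsm r hr x hx)).le)
    have hgi : Integrable ((fun t : ℝ => t ^ p) ∘ (fun x => u (r • x)))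
        ((volume : Measure E).restrict (Ann n)) := Iup r hr
    have hjen := (convexOn_rpow hp1.le).map_average_le hgc isClosed_Ici hfs (I1 r hr) hgi
    rw [average_eq, average_eq, measureReal_restrict_apply_univ] at hjen
    simp only [smul_eq_mul] at hjen
    have hup_le : (∫ x in Ann n, u (r • x) ^ p) ≤ Q r := by
      refine setIntegral_mono_on (Iup r hr) (I2 r hr) measurableSet_Ann fun x hx => ?_
      have h1 : (1 : ℝ) ≤ ‖x‖ ^ 2 := by nlinarith [hx.1]
      have h2 : 0 ≤ u (r • x) ^ p := Real.rpow_nonneg (hupos _ (hsm r hr x hx)).le p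
      nlinarith
    have hFnn : 0 ≤ F r := (hFpos r hr).le
    have h3 : Vr⁻¹ ^ p * F r ^ p ≤ Vr⁻¹ * Q r := by
      calc Vr⁻¹ ^ p * F r ^ p = (Vr⁻¹ * F r) ^ p :=
          (Real.mul_rpow (inv_nonneg.2 hVrpos.le) hFnn).symm
        _ ≤ Vr⁻¹ * (∫ x in Ann n, u (r • x) ^ p) := hjen
        _ ≤ Vr⁻¹ * Q r :=
          mul_le_mul_of_nonneg_left hup_le (inv_nonneg.2 hVrpos.le)
    calc (Vr⁻¹ ^ p * Vr) * F r ^ p = Vr * (Vr⁻¹ ^ p * F r ^ p) := by ring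
      _ ≤ Vr * (Vr⁻¹ * Q r) := mul_le_mul_of_nonneg_left h3 hVrpos.le
      _ = Q r := by field_simp
  -- final application of the ODE lemma
  have hε₀pos : 0 < Vr⁻¹ ^ p * Vr :=
    mul_pos (Real.rpow_pos_of_pos (inv_pos.2 hVrpos) p) hVrpos
  refine ode_contradiction F F1 F2 κ p (Vr⁻¹ ^ p * Vr) hκpos hκp hε₀pos hFd hF1d hFpos ?_
  intro r hr
  have hI := hIden r hr
  have hQr := hQle r hr
  have hκc : κ ^ 2 ≤ c := by
    have h1 : κ ^ 2 = ((n : ℝ) - 2) ^ 2 / 4 := by rw [hκ_def]; ring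
    linarith
  have h2κ : 2 * κ + 1 = (n : ℝ) - 1 := by rw [hκ_def]; ring
  rw [h2κ]
  have hFnn := (hFpos r hr).le
  have hstep1 : κ ^ 2 * F r ≤ c * F r := mul_le_mul_of_nonneg_right hκc hFnn
  have hstep2 := mul_le_mul_of_nonneg_left hQr (sq_nonneg r)
  linarith [hI, hstep1, hstep2]


end NoSolAux

open scoped BigOperators

/-- The Euclidean Laplacian of `u : ℝⁿ → ℝ` at `x`, as the sum of the pure second
derivatives in the standard coordinate directions. -/
noncomputable def eLaplacian {n : ℕ} (u : EuclideanSpace ℝ (Fin n) → ℝ)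
    (x : EuclideanSpace ℝ (Fin n)) : ℝ :=
  ∑ i : Fin n, iteratedFDeriv ℝ 2 u x ![EuclideanSpace.single i 1, EuclideanSpace.single i 1]

theorem stmt0 (n : ℕ) (hn : 3 ≤ n) (c : ℝ) (hc : ((n : ℝ) - 2) ^ 2 / 4 ≤ c) :
    ¬ ∃ u : EuclideanSpace ℝ (Fin n) → ℝ,
        ContDiffOn ℝ (⊤ : ℕ∞) u {x | x ≠ 0} ∧
        (∀ x : EuclideanSpace ℝ (Fin n), x ≠ 0 → 0 < u x) ∧
        (∀ x : EuclideanSpace ℝ (Fin n), x ≠ 0 →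
          eLaplacian u x + (c / ‖x‖ ^ 2) * u x
            + u x ^ (((n : ℝ) + 2) / ((n : ℝ) - 2)) = 0) := by
  rintro ⟨u, hu, hupos, heq⟩
  refine NoSolAux.no_solution hn c hc u hu hupos ?_
  intro x hx
  have h := heq x hx
  have hL : eLaplacian u x = ∑ k, fderiv ℝ (fderiv ℝ u) x (EuclideanSpace.single k 1)
      (EuclideanSpace.single k 1) := by
    unfold eLaplacian
    refine Finset.sum_congr rfl fun k _ => ?_
    rw [iteratedFDeriv_two_apply]
    simp
  rw [hL] at h
  exact h
end

section
/- Let n ≥ 3 and u ∈ C¹(ℝⁿ \ {0}). Suppose that for every y ∈ ℝⁿ \ {0}, every 0 < λ < |y|, and every x ∈ ℝⁿ \ {0} with |x − y| ≥ λ, one has u_{y,λ}(x) ≤ u(x). Then u is radially symmetric about the origin, and writing u(x) = ū(|x|), the function ū is non-increasing on (0,∞). -/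
open scoped BigOperators

/-- The Kelvin transform `u_{y,λ}` of `u : ℝⁿ \ {0} → ℝ`:
`u_{y,λ}(x) = (λ/|x−y|)^{n−2} u(y + λ²(x−y)/|x−y|²)`. -/
noncomputable def kelvin {n : ℕ} (u : EuclideanSpace ℝ (Fin n) → ℝ)
    (y : EuclideanSpace ℝ (Fin n)) (lam : ℝ) (x : EuclideanSpace ℝ (Fin n)) : ℝ :=
  (lam / ‖x - y‖) ^ (n - 2) * u (y + (lam ^ 2 / ‖x - y‖ ^ 2) • (x - y))

/-!
Given `a ≠ 0` and `‖a‖ ≤ ‖b‖`, put the centre `y` on the line through `a` and `b`, beyond `b`,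
at the place where the inversion in the sphere of radius `λ = c ‖a - y‖` about `y` sends `a`
to `b`. Then `u_{y,λ}(a) = c^(n-2) u(b)`, and since `|y|² - λ² = |b|² + s (|b|² - |a|²) > 0`
(with `y = b + s (b - a)`), the hypothesis applies and gives `c^(n-2) u(b) ≤ u(a)` for every
`0 < c < 1`. Letting `c → 1` yields `u(b) ≤ u(a)`; for `|a| = |b|` this is symmetry, and for
`|a| < |b|` monotonicity of the radial profile.
-/

open Filter Topology

section InversionCenter

variable {E : Type*} [NormedAddCommGroup E] [InnerProductSpace ℝ E]

lemma norm_add_smul_sub_sq (a b : E) (s : ℝ) :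
    ‖b + s • (b - a)‖ ^ 2 = ‖b‖ ^ 2 + s * (‖b‖ ^ 2 - ‖a‖ ^ 2) + s * (1 + s) * ‖b - a‖ ^ 2 := by
  have hinner : 2 * inner ℝ b (b - a) = ‖b‖ ^ 2 - ‖a‖ ^ 2 + ‖b - a‖ ^ 2 := by
    rw [norm_sub_sq_real, inner_sub_right, real_inner_self_eq_norm_sq, real_inner_comm]
    ring
  rw [norm_add_sq_real, real_inner_smul_right, norm_smul, mul_pow, Real.norm_eq_abs, sq_abs]
  linear_combination s * hinner

/-- `y + c ^ 2 • (a - y)` is the image of `a` under inversion in the sphere of radius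
`c ‖a - y‖` about `y`. -/
lemma exists_inversion_center {a b : E} (hb : b ≠ 0) (hab : ‖a‖ ≤ ‖b‖) {c : ℝ}
    (hc0 : 0 < c) (hc1 : c < 1) :
    ∃ y : E, c * ‖a - y‖ < ‖y‖ ∧ y + c ^ 2 • (a - y) = b := by
  have hc2 : 0 < 1 - c ^ 2 := by nlinarith
  set s := c ^ 2 / (1 - c ^ 2) with hs_def
  have hs : 0 ≤ s := by positivity
  have hcs : c ^ 2 * (1 + s) = s := by rw [hs_def]; field_simp; ring
  have hay : a - (b + s • (b - a)) = -(1 + s) • (b - a) := by module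
  refine ⟨b + s • (b - a), ?_, ?_⟩
  · have hnorm : (c * ‖a - (b + s • (b - a))‖) ^ 2 = s * (1 + s) * ‖b - a‖ ^ 2 := by
      rw [hay, norm_smul, norm_neg, Real.norm_eq_abs, abs_of_nonneg (by linarith)]
      linear_combination (1 + s) * ‖b - a‖ ^ 2 * hcs
    refine lt_of_pow_lt_pow_left₀ 2 (norm_nonneg _) ?_
    rw [hnorm, norm_add_smul_sub_sq]
    have hb2 : 0 < ‖b‖ ^ 2 := by positivity
    nlinarith [mul_nonneg hs (sub_nonneg.mpr (pow_le_pow_left₀ (norm_nonneg a) hab 2))]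
  · rw [hay, smul_smul, mul_neg, hcs]
    module

end InversionCenter

lemma kelvin_mul_norm_sub {n : ℕ} (u : EuclideanSpace ℝ (Fin n) → ℝ)
    {x y : EuclideanSpace ℝ (Fin n)} (hxy : x ≠ y) (c : ℝ) :
    kelvin u y (c * ‖x - y‖) x = c ^ (n - 2) * u (y + c ^ 2 • (x - y)) := by
  have hd : ‖x - y‖ ≠ 0 := norm_ne_zero_iff.mpr (sub_ne_zero.mpr hxy)
  rw [kelvin, mul_div_cancel_right₀ _ hd, mul_pow, mul_div_cancel_right₀ _ (pow_ne_zero 2 hd)]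

theorem apply_le_apply_of_norm_le_of_kelvin_le {n : ℕ} (u : EuclideanSpace ℝ (Fin n) → ℝ)
    (h : ∀ y : EuclideanSpace ℝ (Fin n), y ≠ 0 → ∀ lam : ℝ, 0 < lam → lam < ‖y‖ →
      ∀ x : EuclideanSpace ℝ (Fin n), x ≠ 0 → lam ≤ ‖x - y‖ →
        kelvin u y lam x ≤ u x)
    {a b : EuclideanSpace ℝ (Fin n)} (ha : a ≠ 0) (hb : b ≠ 0) (hab : ‖a‖ ≤ ‖b‖) :
    u b ≤ u a := by
  rcases eq_or_ne a b with rfl | hne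
  · rfl
  have hbound : ∀ c ∈ Set.Ioo (0 : ℝ) 1, c ^ (n - 2) * u b ≤ u a := by
    rintro c ⟨hc0, hc1⟩
    obtain ⟨y, hlt, hy⟩ := exists_inversion_center hb hab hc0 hc1
    have hay : a ≠ y := by
      rintro rfl
      exact hne (by simpa using hy)
    have hlam : 0 < c * ‖a - y‖ := mul_pos hc0 (norm_pos_iff.mpr (sub_ne_zero.mpr hay))
    have hy0 : y ≠ 0 := norm_pos_iff.mp (hlam.trans hlt)
    have hle : c * ‖a - y‖ ≤ ‖a - y‖ := mul_le_of_le_one_left (norm_nonneg _) hc1.le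
    simpa only [kelvin_mul_norm_sub u hay, hy] using h y hy0 _ hlam hlt a ha hle
  have hlim : Tendsto (fun c : ℝ => c ^ (n - 2) * u b) (𝓝[<] 1) (𝓝 (u b)) := by
    have hcont : Continuous fun c : ℝ => c ^ (n - 2) * u b := by fun_prop
    simpa using hcont.continuousAt.tendsto.mono_left (nhdsWithin_le_nhds (a := (1 : ℝ)))
  exact le_of_tendsto hlim (mem_of_superset (Ioo_mem_nhdsLT zero_lt_one) hbound)

theorem stmt4_general (n : ℕ) (hn : 3 ≤ n) (u : EuclideanSpace ℝ (Fin n) → ℝ)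
    (h : ∀ y : EuclideanSpace ℝ (Fin n), y ≠ 0 → ∀ lam : ℝ, 0 < lam → lam < ‖y‖ →
      ∀ x : EuclideanSpace ℝ (Fin n), x ≠ 0 → lam ≤ ‖x - y‖ →
        kelvin u y lam x ≤ u x) :
    (∀ x y : EuclideanSpace ℝ (Fin n), x ≠ 0 → y ≠ 0 → ‖x‖ = ‖y‖ → u x = u y) ∧
    (∃ ubar : ℝ → ℝ,
      (∀ x : EuclideanSpace ℝ (Fin n), x ≠ 0 → u x = ubar ‖x‖) ∧
      AntitoneOn ubar (Set.Ioi (0 : ℝ))) := by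
  have hmono := @apply_le_apply_of_norm_le_of_kelvin_le n u h
  have sym : ∀ x y : EuclideanSpace ℝ (Fin n), x ≠ 0 → y ≠ 0 → ‖x‖ = ‖y‖ → u x = u y :=
    fun x y hx hy hxy => le_antisymm (hmono hy hx hxy.ge) (hmono hx hy hxy.le)
  let e : EuclideanSpace ℝ (Fin n) := EuclideanSpace.single ⟨0, by omega⟩ 1
  have hre : ∀ r : ℝ, 0 < r → ‖r • e‖ = r ∧ r • e ≠ 0 := fun r hr => by
    have hr' : ‖r • e‖ = r := by simp [e, norm_smul, hr.le]
    exact ⟨hr', fun h0 => hr.ne' (by simpa [h0] using hr'.symm)⟩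
  refine ⟨sym, fun r => u (r • e), fun x hx => ?_, fun r hr s hs hrs => ?_⟩
  · obtain ⟨hnorm, hne⟩ := hre ‖x‖ (norm_pos_iff.mpr hx)
    exact sym x _ hx hne hnorm.symm
  · obtain ⟨hrn, hrne⟩ := hre r hr
    obtain ⟨hsn, hsne⟩ := hre s hs
    exact hmono hrne hsne (by rw [hrn, hsn]; exact hrs)

theorem stmt4 (n : ℕ) (hn : 3 ≤ n) (u : EuclideanSpace ℝ (Fin n) → ℝ)
    (hu : ContDiffOn ℝ 1 u {x | x ≠ 0})
    (h : ∀ y : EuclideanSpace ℝ (Fin n), y ≠ 0 → ∀ lam : ℝ, 0 < lam → lam < ‖y‖ →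
      ∀ x : EuclideanSpace ℝ (Fin n), x ≠ 0 → lam ≤ ‖x - y‖ →
        kelvin u y lam x ≤ u x) :
    (∀ x y : EuclideanSpace ℝ (Fin n), x ≠ 0 → y ≠ 0 → ‖x‖ = ‖y‖ → u x = u y) ∧
    (∃ ubar : ℝ → ℝ,
      (∀ x : EuclideanSpace ℝ (Fin n), x ≠ 0 → u x = ubar ‖x‖) ∧
      AntitoneOn ubar (Set.Ioi (0 : ℝ))) :=
  stmt4_general n hn u h
end

section
/- Let N ≥ 2 and k ≥ 0 be integers. If p is a nonzero real polynomial satisfying (1 − t²) p''(t) − N t p'(t) + k(k + N − 1) p(t) = 0 for all t ∈ ℝ, then p has degree exactly k and p has exactly k real zeros, all of which are simple (the derivative of p is nonzero at each zero) and all of which lie in the open interval (−1, 1). -/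
open Polynomial Set Filter Topology

lemma sign_const {g : Polynomial ℝ} {I : Set ℝ} (hI : Set.OrdConnected I)
    (h0 : ∀ x ∈ I, eval x g ≠ 0) {x y : ℝ} (hx : x ∈ I) (hy : y ∈ I)
    (hpos : 0 < eval x g) : 0 < eval y g := by
  by_contra h
  have hyneg : eval y g < 0 := lt_of_le_of_ne (not_lt.1 h) (h0 y hy)
  rcases le_total x y with hxy | hxy
  · obtain ⟨z, hz, hz0⟩ := intermediate_value_Icc' hxy (g.continuousOn) ⟨hyneg.le, hpos.le⟩
    exact h0 z (hI.out hx hy hz) hz0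
  · obtain ⟨z, hz, hz0⟩ := intermediate_value_Icc hxy (g.continuousOn) ⟨hyneg.le, hpos.le⟩
    exact h0 z (hI.out hy hx hz) hz0

lemma deriv_nonneg_right {q : Polynomial ℝ} {s u : ℝ} (hu : s < u) (hq : eval s q = 0)
    (hpos : ∀ x ∈ Set.Ioo s u, 0 < eval x q) : 0 ≤ eval s (derivative q) := by
  have hd : HasDerivAt (fun x => eval x q) (eval s (derivative q)) s := q.hasDerivAt s
  rw [hasDerivAt_iff_tendsto_slope] at hd
  have hd' : Tendsto (slope (fun x => eval x q) s) (𝓝[>] s) (𝓝 (eval s (derivative q))) :=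
    hd.mono_left (nhdsWithin_mono s (fun x hx => ne_of_gt hx))
  refine ge_of_tendsto hd' ?_
  filter_upwards [Ioo_mem_nhdsGT_of_mem ⟨le_refl s, hu⟩] with x hx
  have : slope (fun x => eval x q) s x = eval x q / (x - s) := by simp [slope, hq]; ring
  rw [this]
  exact le_of_lt (div_pos (hpos x hx) (by linarith [hx.1]))

lemma deriv_nonpos_left {q : Polynomial ℝ} {s u : ℝ} (hu : u < s) (hq : eval s q = 0)
    (hpos : ∀ x ∈ Set.Ioo u s, 0 < eval x q) : eval s (derivative q) ≤ 0 := by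
  have hd : HasDerivAt (fun x => eval x q) (eval s (derivative q)) s := q.hasDerivAt s
  rw [hasDerivAt_iff_tendsto_slope] at hd
  have hd' : Tendsto (slope (fun x => eval x q) s) (𝓝[<] s) (𝓝 (eval s (derivative q))) :=
    hd.mono_left (nhdsWithin_mono s (fun x hx => ne_of_lt hx))
  refine le_of_tendsto hd' ?_
  filter_upwards [Ioo_mem_nhdsLT_of_mem ⟨hu, le_refl s⟩] with x hx
  have : slope (fun x => eval x q) s x = eval x q / (x - s) := by simp [slope, hq]; ring
  rw [this]
  exact le_of_lt (div_neg_of_pos_of_neg (hpos x hx) (by linarith [hx.2]))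

-- negative-side variants
lemma deriv_nonpos_right {q : Polynomial ℝ} {s u : ℝ} (hu : s < u) (hq : eval s q = 0)
    (hneg : ∀ x ∈ Set.Ioo s u, eval x q < 0) : eval s (derivative q) ≤ 0 := by
  have := deriv_nonneg_right (q := -q) hu (by simp [hq])
    (fun x hx => by simp [neg_pos]; exact hneg x hx)
  simpa using this

lemma deriv_nonneg_left {q : Polynomial ℝ} {s u : ℝ} (hu : u < s) (hq : eval s q = 0)
    (hneg : ∀ x ∈ Set.Ioo u s, eval x q < 0) : 0 ≤ eval s (derivative q) := by
  have := deriv_nonpos_left (q := -q) hu (by simp [hq])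
    (fun x hx => by simp [neg_pos]; exact hneg x hx)
  simpa using this

lemma exists_abs_gt_atTop (p : Polynomial ℝ) (hdeg : 0 < p.degree) (c M : ℝ) :
    ∃ T, c < T ∧ M < |eval T p| := by
  have h := p.abs_tendsto_atTop hdeg
  have := ((h.eventually_gt_atTop M).and (eventually_gt_atTop c)).exists
  obtain ⟨T, h1, h2⟩ := this
  exact ⟨T, h2, h1⟩

lemma exists_abs_gt_atBot (p : Polynomial ℝ) (hdeg : 0 < p.degree) (c M : ℝ) :
    ∃ T, T < c ∧ M < |eval T p| := by
  set q := p.comp (-X : ℝ[X]) with hqdef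
  have hq : ∀ x : ℝ, eval x q = eval (-x) p := by
    intro x; simp [hqdef, eval_comp]
  have hdq : 0 < q.degree := by
    rw [← natDegree_pos_iff_degree_pos] at hdeg ⊢
    rw [hqdef, natDegree_comp]
    simpa using hdeg
  obtain ⟨T, hT, hTM⟩ := exists_abs_gt_atTop q hdq (-c) M
  exact ⟨-T, by linarith, by rwa [hq] at hTM⟩

lemma root_between {p : Polynomial ℝ} {s s' : ℝ} (hss : s < s')
    (hne : ∀ x ∈ Set.Ioo s s', eval x (derivative p) ≠ 0)
    (hs : eval s (derivative p) = 0) (hs' : eval s' (derivative p) = 0)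
    (hsgn : eval s p * eval s (derivative (derivative p)) < 0)
    (hsgn' : eval s' p * eval s' (derivative (derivative p)) < 0) :
    ∃ r ∈ Set.Ioo s s', eval r p = 0 := by
  have hm : (s + s') / 2 ∈ Set.Ioo s s' := ⟨by linarith, by linarith⟩
  rcases (hne _ hm).lt_or_gt with hneg | hpos
  · -- p' < 0 on the interval
    have hall : ∀ x ∈ Set.Ioo s s', eval x (derivative p) < 0 := by
      intro x hx
      have := sign_const (g := -(derivative p)) Set.ordConnected_Ioo
        (fun y hy => by simpa using hne y hy) hm hx (by simpa using hneg)
      simpa using this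
    have h1 : eval s (derivative (derivative p)) ≤ 0 := deriv_nonpos_right hss hs hall
    have h2 : 0 ≤ eval s' (derivative (derivative p)) := deriv_nonneg_left hss hs' hall
    have hps : 0 < eval s p := by nlinarith
    have hps' : eval s' p < 0 := by nlinarith
    obtain ⟨r, hr, hr0⟩ := intermediate_value_Ioo' hss.le p.continuousOn
      (show (0:ℝ) ∈ Set.Ioo (eval s' p) (eval s p) from ⟨hps', hps⟩)
    exact ⟨r, hr, hr0⟩
  · have hall : ∀ x ∈ Set.Ioo s s', 0 < eval x (derivative p) := fun x hx =>
      sign_const Set.ordConnected_Ioo hne hm hx hpos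
    have h1 : 0 ≤ eval s (derivative (derivative p)) := deriv_nonneg_right hss hs hall
    have h2 : eval s' (derivative (derivative p)) ≤ 0 := deriv_nonpos_left hss hs' hall
    have hps : eval s p < 0 := by nlinarith
    have hps' : 0 < eval s' p := by nlinarith
    obtain ⟨r, hr, hr0⟩ := intermediate_value_Ioo hss.le p.continuousOn
      (show (0:ℝ) ∈ Set.Ioo (eval s p) (eval s' p) from ⟨hps, hps'⟩)
    exact ⟨r, hr, hr0⟩

lemma root_above {p : Polynomial ℝ} {s : ℝ} (hdeg : 0 < p.degree)
    (hne : ∀ x ∈ Set.Ioi s, eval x (derivative p) ≠ 0)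
    (hs : eval s (derivative p) = 0)
    (hsgn : eval s p * eval s (derivative (derivative p)) < 0) :
    ∃ r, s < r ∧ eval r p = 0 := by
  have hm : s + 1 ∈ Set.Ioi s := by simp
  rcases (hne _ hm).lt_or_gt with hneg | hpos
  · -- p' < 0 on (s, ∞): p decreasing, p(s) > 0, find T with p T < 0
    have hall : ∀ x ∈ Set.Ioi s, eval x (derivative p) < 0 := by
      intro x hx
      have := sign_const (g := -(derivative p)) Set.ordConnected_Ioi
        (fun y hy => by simpa using hne y hy) hm hx (by simpa using hneg)
      simpa using this
    have h1 : eval s (derivative (derivative p)) ≤ 0 :=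
      deriv_nonpos_right (u := s + 1) (by linarith) hs
        (fun x hx => hall x hx.1)
    have hps : 0 < eval s p := by nlinarith
    have hanti : StrictAntiOn (fun x => eval x p) (Set.Ici s) := by
      refine strictAntiOn_of_deriv_neg (convex_Ici s) p.continuousOn ?_
      intro x hx
      rw [interior_Ici] at hx
      rw [Polynomial.deriv]
      exact hall x hx
    obtain ⟨T, hT, hTM⟩ := exists_abs_gt_atTop p hdeg (s + 1) |eval (s+1) p|
    have hmono : eval T p ≤ eval (s+1) p :=
      (hanti.antitoneOn (by simp : (s+1:ℝ) ∈ Set.Ici s)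
        (by simp only [Set.mem_Ici]; linarith : T ∈ Set.Ici s) hT.le)
    have hTneg : eval T p < 0 := by
      rcases lt_trichotomy (eval T p) 0 with h | h | h
      · exact h
      · rw [h] at hTM; simp at hTM; exact absurd hTM (abs_nonneg _).not_gt
      · have h1' : eval T p > |eval (s+1) p| := by rwa [abs_of_pos h] at hTM
        have h2' : eval (s+1) p ≤ |eval (s+1) p| := le_abs_self _
        linarith
    obtain ⟨r, hr, hr0⟩ := intermediate_value_Ioo' (by linarith : s ≤ T) p.continuousOn
      (show (0:ℝ) ∈ Set.Ioo (eval T p) (eval s p) from ⟨hTneg, hps⟩)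
    exact ⟨r, hr.1, hr0⟩
  · have hall : ∀ x ∈ Set.Ioi s, 0 < eval x (derivative p) := fun x hx =>
      sign_const Set.ordConnected_Ioi hne hm hx hpos
    have h1 : 0 ≤ eval s (derivative (derivative p)) :=
      deriv_nonneg_right (u := s + 1) (by linarith) hs (fun x hx => hall x hx.1)
    have hps : eval s p < 0 := by nlinarith
    have hmono' : StrictMonoOn (fun x => eval x p) (Set.Ici s) := by
      refine strictMonoOn_of_deriv_pos (convex_Ici s) p.continuousOn ?_
      intro x hx
      rw [interior_Ici] at hx
      rw [Polynomial.deriv]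
      exact hall x hx
    obtain ⟨T, hT, hTM⟩ := exists_abs_gt_atTop p hdeg (s + 1) |eval (s+1) p|
    have hmono : eval (s+1) p ≤ eval T p :=
      (hmono'.monotoneOn (by simp : (s+1:ℝ) ∈ Set.Ici s)
        (by simp only [Set.mem_Ici]; linarith : T ∈ Set.Ici s) hT.le)
    have hTpos : 0 < eval T p := by
      rcases lt_trichotomy (eval T p) 0 with h | h | h
      · have h1' : -eval T p > |eval (s+1) p| := by rwa [abs_of_neg h] at hTM
        have h2' : -eval (s+1) p ≤ |eval (s+1) p| := neg_le_abs _
        linarith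
      · rw [h] at hTM; simp at hTM; exact absurd hTM (abs_nonneg _).not_gt
      · exact h
    obtain ⟨r, hr, hr0⟩ := intermediate_value_Ioo (by linarith : s ≤ T) p.continuousOn
      (show (0:ℝ) ∈ Set.Ioo (eval s p) (eval T p) from ⟨hps, hTpos⟩)
    exact ⟨r, hr.1, hr0⟩

lemma root_below {p : Polynomial ℝ} {s : ℝ} (hdeg : 0 < p.degree)
    (hne : ∀ x ∈ Set.Iio s, eval x (derivative p) ≠ 0)
    (hs : eval s (derivative p) = 0)
    (hsgn : eval s p * eval s (derivative (derivative p)) < 0) :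
    ∃ r, r < s ∧ eval r p = 0 := by
  have hm : s - 1 ∈ Set.Iio s := by simp
  rcases (hne _ hm).lt_or_gt with hneg | hpos
  · -- p' < 0 on (-∞, s): p decreasing down to s, p''(s) ≥ 0, p(s) < 0, find T with p T > 0
    have hall : ∀ x ∈ Set.Iio s, eval x (derivative p) < 0 := by
      intro x hx
      have := sign_const (g := -(derivative p)) Set.ordConnected_Iio
        (fun y hy => by simpa using hne y hy) hm hx (by simpa using hneg)
      simpa using this
    have h1 : 0 ≤ eval s (derivative (derivative p)) :=
      deriv_nonneg_left (u := s - 1) (by linarith) hs (fun x hx => hall x hx.2)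
    have hps : eval s p < 0 := by nlinarith
    have hanti : StrictAntiOn (fun x => eval x p) (Set.Iic s) := by
      refine strictAntiOn_of_deriv_neg (convex_Iic s) p.continuousOn ?_
      intro x hx
      rw [interior_Iic] at hx
      rw [Polynomial.deriv]
      exact hall x hx
    obtain ⟨T, hT, hTM⟩ := exists_abs_gt_atBot p hdeg (s - 1) |eval (s-1) p|
    have hmono : eval (s-1) p ≤ eval T p :=
      (hanti.antitoneOn (by simp only [Set.mem_Iic]; linarith : T ∈ Set.Iic s)
        (by simp : (s-1:ℝ) ∈ Set.Iic s) hT.le)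
    have hTpos : 0 < eval T p := by
      rcases lt_trichotomy (eval T p) 0 with h | h | h
      · have h1' : -eval T p > |eval (s-1) p| := by rwa [abs_of_neg h] at hTM
        have h2' : -eval (s-1) p ≤ |eval (s-1) p| := neg_le_abs _
        linarith
      · rw [h] at hTM; simp at hTM; exact absurd hTM (abs_nonneg _).not_gt
      · exact h
    obtain ⟨r, hr, hr0⟩ := intermediate_value_Ioo' (by linarith : T ≤ s) p.continuousOn
      (show (0:ℝ) ∈ Set.Ioo (eval s p) (eval T p) from ⟨hps, hTpos⟩)
    exact ⟨r, hr.2, hr0⟩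
  · -- p' > 0 on (-∞, s): p increasing up to s, p''(s) ≤ 0, p(s) > 0, find T with p T < 0
    have hall : ∀ x ∈ Set.Iio s, 0 < eval x (derivative p) := fun x hx =>
      sign_const Set.ordConnected_Iio hne hm hx hpos
    have h1 : eval s (derivative (derivative p)) ≤ 0 :=
      deriv_nonpos_left (u := s - 1) (by linarith) hs (fun x hx => hall x hx.2)
    have hps : 0 < eval s p := by nlinarith
    have hmono' : StrictMonoOn (fun x => eval x p) (Set.Iic s) := by
      refine strictMonoOn_of_deriv_pos (convex_Iic s) p.continuousOn ?_
      intro x hx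
      rw [interior_Iic] at hx
      rw [Polynomial.deriv]
      exact hall x hx
    obtain ⟨T, hT, hTM⟩ := exists_abs_gt_atBot p hdeg (s - 1) |eval (s-1) p|
    have hmono : eval T p ≤ eval (s-1) p :=
      (hmono'.monotoneOn (by simp only [Set.mem_Iic]; linarith : T ∈ Set.Iic s)
        (by simp : (s-1:ℝ) ∈ Set.Iic s) hT.le)
    have hTneg : eval T p < 0 := by
      rcases lt_trichotomy (eval T p) 0 with h | h | h
      · exact h
      · rw [h] at hTM; simp at hTM; exact absurd hTM (abs_nonneg _).not_gt
      · have h1' : eval T p > |eval (s-1) p| := by rwa [abs_of_pos h] at hTM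
        have h2' : eval (s-1) p ≤ |eval (s-1) p| := le_abs_self _
        linarith
    obtain ⟨r, hr, hr0⟩ := intermediate_value_Ioo (by linarith : T ≤ s) p.continuousOn
      (show (0:ℝ) ∈ Set.Ioo (eval T p) (eval s p) from ⟨hTneg, hps⟩)
    exact ⟨r, hr.2, hr0⟩

lemma lam_eq {p : Polynomial ℝ} (hp : p ≠ 0) {N : ℕ} {lam : ℝ}
    (hid : (1 - X^2) * derivative (derivative p) - C (N:ℝ) * (X * derivative p)
      + C lam * p = 0) :
    lam = (p.natDegree : ℝ) * ((p.natDegree : ℝ) + N - 1) := by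
  have hid' : derivative (derivative p) - (derivative (derivative p)) * X^2
      - C (N:ℝ) * (X * derivative p) + C lam * p = 0 := by linear_combination hid
  have ha : p.coeff p.natDegree ≠ 0 := by
    rw [← leadingCoeff]; exact leadingCoeff_ne_zero.mpr hp
  rcases hn : p.natDegree with _ | m
  · obtain ⟨a, rfl⟩ := natDegree_eq_zero.mp hn
    have ha' : a ≠ 0 := by rintro rfl; simp at hp
    simp only [derivative_C, derivative_zero, zero_sub, neg_zero, mul_zero, zero_mul,
      sub_zero, zero_add, ← C_mul] at hid'
    have h0 : lam * a = 0 := by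
      have := congrArg (fun f => coeff f 0) hid'
      simpa using this
    have : lam = 0 := by
      rcases mul_eq_zero.mp h0 with h | h
      · exact h
      · exact absurd h ha'
    simp [this]
  · rw [hn] at ha
    have h := congrArg (fun f => coeff f (m+1)) hid'
    simp only [coeff_add, coeff_sub, coeff_C_mul, coeff_zero] at h
    have e1 : coeff (derivative (derivative p)) (m+1) = 0 := by
      rw [coeff_derivative, coeff_derivative]
      have : p.coeff (m + 1 + 1 + 1) = 0 :=
        coeff_eq_zero_of_natDegree_lt (by omega)
      rw [this]; ring
    have e2 : coeff (X * derivative p) (m+1) = p.coeff (m+1) * (m+1) := by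
      rw [coeff_X_mul, coeff_derivative]
    rcases m with _ | j
    · -- natDegree = 1
      have e3 : coeff (derivative (derivative p) * X^2) (0+1) = 0 := by
        rw [coeff_mul_X_pow']; simp
      rw [e1, e2, e3] at h
      have hc : p.coeff (0+1) ≠ 0 := ha
      have h' : (lam - (N:ℝ)) * p.coeff (0+1) = 0 := by
        push_cast at h ⊢; linear_combination h
      rcases mul_eq_zero.mp h' with h'' | h''
      · push_cast; linarith
      · exact absurd h'' hc
    · -- natDegree = j + 2
      rw [e1, e2] at h
      have hj : j + 1 + 1 = j + 2 := by omega
      rw [hj] at h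
      have e3 : coeff (derivative (derivative p) * X^2) (j+2)
          = p.coeff (j+2) * ((j:ℝ)+2) * ((j:ℝ)+1) := by
        rw [coeff_mul_X_pow' (derivative (derivative p)) 2 (j+2)]
        rw [if_pos (by omega : 2 ≤ j + 2), show j + 2 - 2 = j from by omega]
        rw [coeff_derivative, coeff_derivative, show j + 1 + 1 = j + 2 from by omega]
        push_cast; ring
      rw [e3] at h
      have hc : p.coeff (j+2) ≠ 0 := ha
      have h' : (lam - ((j:ℝ)+2) * (((j:ℝ)+2) + N - 1)) * p.coeff (j+2) = 0 := by
        push_cast at h ⊢; linear_combination h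
      rcases mul_eq_zero.mp h' with h'' | h''
      · push_cast at h'' ⊢; linarith
      · exact absurd h'' hc

lemma no_root_outside {p : Polynomial ℝ} {N : ℕ} {lam : ℝ} (hN : 2 ≤ N) (hlam : 0 < lam)
    (hid : (1 - X^2) * derivative (derivative p) - C (N:ℝ) * (X * derivative p)
      + C lam * p = 0)
    {r : ℝ} (hr : 1 ≤ |r|) (h0 : eval r p = 0) (hd : eval r (derivative p) ≠ 0) : False := by
  have hN' : (2:ℝ) ≤ (N:ℝ) := by exact_mod_cast hN
  have hode : ∀ t : ℝ, (1 - t^2) * eval t (derivative (derivative p))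
      - (N:ℝ) * (t * eval t (derivative p)) + lam * eval t p = 0 := by
    intro t
    have := congrArg (eval t) hid
    simpa using this
  set F : Polynomial ℝ := C lam * p^2 - (X^2 - 1) * (derivative p)^2 with hFdef
  have hF' : derivative F = (2 * C (N:ℝ) - 2) * (X * (derivative p)^2) := by
    have h1 : derivative F = C lam * (2 * p * derivative p)
        - ((2 * X) * (derivative p)^2
          + (X^2 - 1) * (2 * derivative p * derivative (derivative p))) := by
      simp only [hFdef, derivative_sub, derivative_mul, derivative_pow, derivative_C,
        derivative_X, derivative_one, map_ofNat, Polynomial.C_eq_natCast, Nat.cast_ofNat]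
      ring
    rw [h1]; linear_combination (2 * derivative p) * hid
  have hFeval : ∀ t : ℝ, eval t F = lam * (eval t p)^2 - (t^2 - 1) * (eval t (derivative p))^2 := by
    intro t; simp [hFdef]
  have hF'eval : ∀ t : ℝ, eval t (derivative F)
      = (2 * (N:ℝ) - 2) * (t * (eval t (derivative p))^2) := by
    intro t; rw [hF']; simp
  rcases abs_le.mp (le_refl |r|) with _
  rcases le_or_gt 1 r with hr1 | hr1
  · -- r ≥ 1
    rcases eq_or_lt_of_le hr1 with rfl | hr2
    · -- r = 1
      have h := hode 1
      rw [h0] at h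
      simp at h
      rcases h with h | h
      · linarith
      · exact hd h
    · have hmono : MonotoneOn (fun x => eval x F) (Set.Icc 1 r) := by
        apply monotoneOn_of_deriv_nonneg (convex_Icc 1 r) F.continuousOn
          (F.differentiable.differentiableOn)
        intro x hx
        rw [interior_Icc] at hx
        rw [Polynomial.deriv, hF'eval]
        have hx0 : (0:ℝ) < x := by linarith [hx.1]
        exact mul_nonneg (by linarith) (mul_nonneg hx0.le (sq_nonneg _))
      have hle : eval 1 F ≤ eval r F :=
        hmono (Set.mem_Icc.mpr ⟨le_refl 1, hr1⟩) (Set.mem_Icc.mpr ⟨hr1, le_refl r⟩) hr1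
      rw [hFeval, hFeval, h0] at hle
      norm_num at hle
      have hdsq : 0 < (eval r (derivative p))^2 := by positivity
      have hpos : 0 < (r^2 - 1) * (eval r (derivative p))^2 :=
        mul_pos (by nlinarith) hdsq
      nlinarith [mul_nonneg hlam.le (sq_nonneg (eval 1 p))]
  · -- r < 1, so r ≤ -1
    have hrneg : r ≤ -1 := by
      rcases abs_cases r with ⟨h1, _⟩ | ⟨h1, _⟩ <;> linarith
    rcases eq_or_lt_of_le hrneg with rfl | hr2
    · have h := hode (-1)
      rw [h0] at h
      simp at h
      rcases h with h | h
      · linarith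
      · exact hd h
    · have hmono : AntitoneOn (fun x => eval x F) (Set.Icc r (-1)) := by
        apply antitoneOn_of_deriv_nonpos (convex_Icc r (-1)) F.continuousOn
          (F.differentiable.differentiableOn)
        intro x hx
        rw [interior_Icc] at hx
        rw [Polynomial.deriv, hF'eval]
        have hx0 : x < 0 := by linarith [hx.2]
        nlinarith [mul_nonneg (show (0:ℝ) ≤ 2*(N:ℝ)-2 by linarith)
          (mul_nonneg (neg_nonneg.mpr hx0.le) (sq_nonneg (eval x (derivative p))))]
      have hle : eval (-1) F ≤ eval r F :=
        hmono (Set.mem_Icc.mpr ⟨le_refl r, hrneg⟩) (Set.mem_Icc.mpr ⟨hrneg, le_refl (-1:ℝ)⟩) hrneg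
      rw [hFeval, hFeval, h0] at hle
      norm_num at hle
      have hdsq : 0 < (eval r (derivative p))^2 := by positivity
      have hpos : 0 < (r^2 - 1) * (eval r (derivative p))^2 :=
        mul_pos (by nlinarith) hdsq
      nlinarith [mul_nonneg hlam.le (sq_nonneg (eval (-1) p))]

lemma main_ind : ∀ (k N : ℕ) (p : Polynomial ℝ), 2 ≤ N → p ≠ 0 →
    (∀ t : ℝ,
      (1 - t ^ 2) * (p.derivative.derivative.eval t) - (N : ℝ) * t * (p.derivative.eval t)
        + (k : ℝ) * ((k : ℝ) + (N : ℝ) - 1) * p.eval t = 0) →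
    p.natDegree = k ∧
    ∃ S : Finset ℝ, S.card = k ∧
      (∀ t : ℝ, p.eval t = 0 ↔ t ∈ S) ∧
      (∀ t ∈ S, t ∈ Set.Ioo (-1 : ℝ) 1 ∧ p.derivative.eval t ≠ 0) := by
  intro k
  induction k with
  | zero =>
    intro N p hN hp hode
    have hid : (1 - X^2) * derivative (derivative p) - C (N:ℝ) * (X * derivative p)
        + C ((0:ℝ) * ((0:ℝ) + (N:ℝ) - 1)) * p = 0 := by
      apply Polynomial.funext
      intro t
      have h := hode t
      simp only [eval_add, eval_sub, eval_mul, eval_pow, eval_C, eval_X, eval_one, eval_zero]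
      push_cast at h ⊢
      linarith
    have hl := lam_eq hp hid
    have hN' : (2:ℝ) ≤ (N:ℝ) := by exact_mod_cast hN
    have hdeg : p.natDegree = 0 := by
      by_contra h
      have h1 : 1 ≤ p.natDegree := Nat.one_le_iff_ne_zero.mpr h
      have h1' : (1:ℝ) ≤ (p.natDegree : ℝ) := by exact_mod_cast h1
      nlinarith
    refine ⟨hdeg, ∅, rfl, ?_, by simp⟩
    obtain ⟨a, rfl⟩ := natDegree_eq_zero.mp hdeg
    have ha : a ≠ 0 := fun h => hp (by rw [h]; simp)
    intro t
    simp [ha]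
  | succ k ih =>
    intro N p hN hp hode
    have hN' : (2:ℝ) ≤ (N:ℝ) := by exact_mod_cast hN
    have hk0 : (0:ℝ) ≤ (k:ℝ) := Nat.cast_nonneg k
    set lam : ℝ := ((k:ℕ)+1 : ℝ) * (((k:ℕ)+1:ℝ) + (N:ℝ) - 1) with hlamdef
    have hlampos : 0 < lam := by rw [hlamdef]; nlinarith
    have hid : (1 - X^2) * derivative (derivative p) - C (N:ℝ) * (X * derivative p)
        + C lam * p = 0 := by
      apply Polynomial.funext
      intro t
      have h := hode t
      simp only [eval_add, eval_sub, eval_mul, eval_pow, eval_C, eval_X, eval_one, eval_zero]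
      push_cast at h ⊢
      linear_combination h
    -- pointwise ODE with lam
    have hode' : ∀ t : ℝ, (1 - t^2) * eval t (derivative (derivative p))
        - (N:ℝ) * (t * eval t (derivative p)) + lam * eval t p = 0 := by
      intro t
      have := congrArg (eval t) hid
      simpa using this
    have hq0 : derivative p ≠ 0 := by
      intro h
      rw [h] at hid
      simp only [derivative_zero, mul_zero, sub_zero, zero_add] at hid
      rcases mul_eq_zero.mp hid with h' | h'
      · rw [Polynomial.C_eq_zero] at h'
        exact absurd h' (ne_of_gt hlampos)
      · exact hp h'
    -- derivative satisfies the ODE with N+2, k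
    have hid2 : (1 - X^2) * derivative (derivative (derivative p))
        - (C (N:ℝ) + 2) * (X * derivative (derivative p))
        + (C lam - C (N:ℝ)) * derivative p = 0 := by
      have hD := congrArg derivative hid
      simp only [derivative_add, derivative_sub, derivative_mul, derivative_one,
        derivative_X, derivative_pow, derivative_C, derivative_zero,
        Polynomial.derivative_natCast, Polynomial.C_eq_natCast, Nat.cast_ofNat, map_ofNat] at hD
      simp only [Polynomial.C_eq_natCast]
      linear_combination hD
    have hodeq : ∀ t : ℝ,
        (1 - t ^ 2) * ((derivative p).derivative.derivative.eval t)
          - ((N+2 : ℕ) : ℝ) * t * ((derivative p).derivative.eval t)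
          + (k : ℝ) * ((k : ℝ) + ((N+2:ℕ) : ℝ) - 1) * (derivative p).eval t = 0 := by
      intro t
      have h := congrArg (eval t) hid2
      simp only [eval_add, eval_sub, eval_mul, eval_pow, eval_C, eval_X, eval_one,
        eval_zero, eval_ofNat] at h
      push_cast at h ⊢
      linear_combination h
    obtain ⟨hqdeg, S', hS'card, hS'roots, hS'props⟩ :=
      ih (N+2) (derivative p) (by omega) hq0 hodeq
    -- degree of p
    have hl := lam_eq hp hid
    have hpdeg : p.natDegree = k + 1 := by
      rcases lt_trichotomy p.natDegree (k+1) with h | h | h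
      · exfalso
        have h1 : (p.natDegree : ℝ) ≤ (k:ℝ) := by
          have : p.natDegree ≤ k := by omega
          exact_mod_cast this
        have h0 : (0:ℝ) ≤ (p.natDegree : ℝ) := Nat.cast_nonneg _
        rw [hlamdef] at hl
        nlinarith
      · exact h
      · exfalso
        have h1 : ((k:ℝ) + 2) ≤ (p.natDegree : ℝ) := by
          have : k + 2 ≤ p.natDegree := by omega
          exact_mod_cast this
        rw [hlamdef] at hl
        nlinarith
    -- roots of p are simple
    have hdisj : ∀ r : ℝ, eval r p = 0 → eval r (derivative p) ≠ 0 := by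
      intro r hr hdr
      have hrS' : r ∈ S' := (hS'roots r).mp hdr
      obtain ⟨hIoo, hq'⟩ := hS'props r hrS'
      have h := hode' r
      rw [hr, hdr] at h
      simp only [mul_zero, sub_zero, add_zero] at h
      have hr2 : r^2 < 1 := by
        have h1 := hIoo.1; have h2 := hIoo.2; nlinarith
      have : eval r (derivative (derivative p)) = 0 := by
        rcases mul_eq_zero.mp h with h' | h'
        · linarith
        · exact h'
      exact hq' this
    -- roots of p are in Ioo
    have hIoo : ∀ r : ℝ, eval r p = 0 → r ∈ Set.Ioo (-1:ℝ) 1 := by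
      intro r hr
      by_contra h
      have habs : 1 ≤ |r| := by
        simp only [Set.mem_Ioo, not_and_or, not_lt] at h
        rcases h with h | h
        · rw [abs_of_nonpos (by linarith)]; linarith
        · rw [abs_of_nonneg (by linarith)]; linarith
      exact no_root_outside hN hlampos hid habs hr (hdisj r hr)
    -- sign condition at critical points
    have hsgn : ∀ s ∈ S', eval s p * eval s (derivative (derivative p)) < 0 := by
      intro s hs
      obtain ⟨hsIoo, hq'⟩ := hS'props s hs
      have hqs : eval s (derivative p) = 0 := (hS'roots s).mpr hs
      have h := hode' s
      rw [hqs] at h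
      simp only [mul_zero, sub_zero] at h
      have hs2 : 0 < 1 - s^2 := by
        have h1 := hsIoo.1; have h2 := hsIoo.2; nlinarith
      have hq'' : eval s (derivative (derivative p)) ≠ 0 := hq'
      have hsq : 0 < (eval s (derivative (derivative p)))^2 := by positivity
      have hkey : lam * (eval s p * eval s (derivative (derivative p)))
          = -((1 - s^2) * (eval s (derivative (derivative p)))^2) := by
        linear_combination eval s (derivative (derivative p)) * h
      nlinarith [hkey, mul_pos hs2 hsq]
    -- the root finset
    set S : Finset ℝ := p.roots.toFinset with hSdef
    have hS : ∀ t : ℝ, eval t p = 0 ↔ t ∈ S := by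
      intro t
      rw [hSdef, Multiset.mem_toFinset, Polynomial.mem_roots hp]
      exact ⟨fun h => h, fun h => h⟩
    have hupper : S.card ≤ k + 1 := by
      calc S.card ≤ Multiset.card p.roots := Multiset.toFinset_card_le _
        _ ≤ p.natDegree := p.card_roots'
        _ = k + 1 := hpdeg
    have hdegpos : 0 < p.degree := by
      rw [← natDegree_pos_iff_degree_pos, hpdeg]; omega
    -- lower bound on number of roots
    have hex : ∀ s : ℝ, ∃ r, s ∈ S' →
        (eval r p = 0 ∧ s < r ∧ ∀ x ∈ S', s < x → r < x) := by
      intro s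
      by_cases hs : s ∈ S'
      · have hqs : eval s (derivative p) = 0 := (hS'roots s).mpr hs
        set A := S'.filter (fun x => s < x) with hAdef
        by_cases hA : A.Nonempty
        · set s' := A.min' hA with hs'def
          have hs'A : s' ∈ A := A.min'_mem hA
          have hs'S' : s' ∈ S' := (Finset.mem_filter.mp hs'A).1
          have hss' : s < s' := (Finset.mem_filter.mp hs'A).2
          have hne : ∀ x ∈ Set.Ioo s s', eval x (derivative p) ≠ 0 := by
            intro x hx hc
            have hxS' : x ∈ S' := (hS'roots x).mp hc
            have hxA : x ∈ A := Finset.mem_filter.mpr ⟨hxS', hx.1⟩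
            exact absurd (A.min'_le x hxA) (not_le.mpr hx.2)
          have hqs' : eval s' (derivative p) = 0 := (hS'roots s').mpr hs'S'
          obtain ⟨r, hr, hr0⟩ := root_between hss' hne hqs hqs' (hsgn s hs) (hsgn s' hs'S')
          refine ⟨r, fun _ => ⟨hr0, hr.1, ?_⟩⟩
          intro x hx hsx
          have hxA : x ∈ A := Finset.mem_filter.mpr ⟨hx, hsx⟩
          exact lt_of_lt_of_le hr.2 (A.min'_le x hxA)
        · have hne : ∀ x ∈ Set.Ioi s, eval x (derivative p) ≠ 0 := by
            intro x hx hc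
            have hxS' : x ∈ S' := (hS'roots x).mp hc
            exact hA ⟨x, Finset.mem_filter.mpr ⟨hxS', hx⟩⟩
          obtain ⟨r, hr, hr0⟩ := root_above hdegpos hne hqs (hsgn s hs)
          refine ⟨r, fun _ => ⟨hr0, hr, ?_⟩⟩
          intro x hx hsx
          exact absurd ⟨x, Finset.mem_filter.mpr ⟨hx, hsx⟩⟩ hA
      · exact ⟨0, fun h => absurd h hs⟩
    choose f hf using hex
    have hlower : k + 1 ≤ S.card := by
      by_cases hS'e : S'.Nonempty
      · set s₀ := S'.min' hS'e with hs0def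
        have hs0S' : s₀ ∈ S' := S'.min'_mem hS'e
        have hqs0 : eval s₀ (derivative p) = 0 := (hS'roots s₀).mpr hs0S'
        have hne : ∀ x ∈ Set.Iio s₀, eval x (derivative p) ≠ 0 := by
          intro x hx hc
          have hxS' : x ∈ S' := (hS'roots x).mp hc
          exact absurd (S'.min'_le x hxS') (not_le.mpr hx)
        obtain ⟨r₀, hr₀, hr₀0⟩ := root_below hdegpos hne hqs0 (hsgn s₀ hs0S')
        have hinj : Set.InjOn f ↑S' := by
          intro a ha b hb hab
          by_contra hne'
          rcases lt_or_gt_of_ne hne' with h | h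
          · have h1 : f a < b := (hf a ha).2.2 b hb h
            have h2 : b < f b := (hf b hb).2.1
            rw [hab] at h1; linarith
          · have h1 : f b < a := (hf b hb).2.2 a ha h
            have h2 : a < f a := (hf a ha).2.1
            rw [← hab] at h1; linarith
        have hr₀nmem : r₀ ∉ S'.image f := by
          intro hc
          obtain ⟨s, hs, hfs⟩ := Finset.mem_image.mp hc
          have h1 : s₀ ≤ s := S'.min'_le s hs
          have h2 : s < f s := (hf s hs).2.1
          rw [hfs] at h2
          linarith
        have hsub : insert r₀ (S'.image f) ⊆ S := by
          intro x hx
          rcases Finset.mem_insert.mp hx with rfl | hx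
          · exact (hS x).mp hr₀0
          · obtain ⟨s, hs, rfl⟩ := Finset.mem_image.mp hx
            exact (hS _).mp (hf s hs).1
        calc k + 1 = S'.card + 1 := by rw [hS'card]
          _ = (S'.image f).card + 1 := by rw [Finset.card_image_of_injOn hinj]
          _ = (insert r₀ (S'.image f)).card := (Finset.card_insert_of_notMem hr₀nmem).symm
          _ ≤ S.card := Finset.card_le_card hsub
      · -- S' empty: k = 0, p has degree 1
        have hk : k = 0 := by
          rw [← hS'card]
          simp [Finset.not_nonempty_iff_eq_empty.mp hS'e]
        have hdeg1 : p.natDegree = 1 := by omega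
        obtain ⟨a, ha, b, hab⟩ := natDegree_eq_one.mp hdeg1
        have hroot : eval (-b/a) p = 0 := by
          rw [← hab]
          simp only [eval_add, eval_mul, eval_C, eval_X]
          field_simp
          ring
        have : (-b/a) ∈ S := (hS _).mp hroot
        have : 1 ≤ S.card := Finset.card_pos.mpr ⟨_, this⟩
        omega
    refine ⟨hpdeg, S, le_antisymm hupper hlower, hS, ?_⟩
    intro t ht
    have hroot : eval t p = 0 := (hS t).mpr ht
    exact ⟨hIoo t hroot, hdisj t hroot⟩

theorem stmt7 (N k : ℕ) (hN : 2 ≤ N) (p : Polynomial ℝ) (hp : p ≠ 0)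
    (hode : ∀ t : ℝ,
      (1 - t ^ 2) * (p.derivative.derivative.eval t) - (N : ℝ) * t * (p.derivative.eval t)
        + (k : ℝ) * ((k : ℝ) + (N : ℝ) - 1) * p.eval t = 0) :
    p.natDegree = k ∧
    ∃ S : Finset ℝ, S.card = k ∧
      (∀ t : ℝ, p.eval t = 0 ↔ t ∈ S) ∧
      (∀ t ∈ S, t ∈ Set.Ioo (-1 : ℝ) 1 ∧ p.derivative.eval t ≠ 0) := by
  exact main_ind k N p hN hp hode
end

section
/- Let n ≥ 3 and β ≤ 0. Then there is no function u ∈ C²((0,∞)) with u(r) > 0 for all r ∈ (0,∞) satisfying u''(r) + ((n−1)/r) u'(r) + ((n(n−2) − 4β)/(1+r²)²) u(r) + u(r)^{(n+2)/(n−2)} = 0 for all r ∈ (0,∞). -/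
/-!
The bubble `ψ(r) = (1 + r²)^(-(n-2)/2)` solves `ψ'' + (n-1)/r ψ' + n(n-2)/(1+r²)² ψ = 0`, and
with `β ≤ 0` a positive solution `u` satisfies `u'' + (n-1)/r u' + n(n-2)/(1+r²)² u < 0`. Hence the
Wronskian `W = r^(n-1) (ψ u' - ψ' u)` is strictly decreasing on `(0, ∞)`.

On the other hand `r^(n-1) u'` and `(n-2) u + r u'` are decreasing too, and positivity of `u` near
`0`, resp. near `∞`, forces `u' < 0` and `(n-2) u + r u' > 0`. With these, `W ≤ C r²` for `r ≤ 1`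
and `W ≥ -C / r²` for `r ≥ 1`; being decreasing, `W` is then both `≤ 0` and `≥ 0` everywhere,
contradicting strictness.
-/

open Set Filter Topology

section Monotonicity

variable {D : Set ℝ} {f f' : ℝ → ℝ}

theorem strictAntiOn_of_hasDerivAt_neg (hD : Convex ℝ D) (hf : ∀ x ∈ D, HasDerivAt f (f' x) x)
    (hf' : ∀ x ∈ interior D, f' x < 0) : StrictAntiOn f D :=
  strictAntiOn_of_hasDerivWithinAt_neg hD (fun x hx => (hf x hx).continuousAt.continuousWithinAt)
    (fun x hx => (hf x (interior_subset hx)).hasDerivWithinAt) hf'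

theorem monotoneOn_of_hasDerivAt_nonneg (hD : Convex ℝ D) (hf : ∀ x ∈ D, HasDerivAt f (f' x) x)
    (hf' : ∀ x ∈ interior D, 0 ≤ f' x) : MonotoneOn f D :=
  monotoneOn_of_hasDerivWithinAt_nonneg hD (fun x hx => (hf x hx).continuousAt.continuousWithinAt)
    (fun x hx => (hf x (interior_subset hx)).hasDerivWithinAt) hf'

theorem antitoneOn_of_hasDerivAt_nonpos (hD : Convex ℝ D) (hf : ∀ x ∈ D, HasDerivAt f (f' x) x)
    (hf' : ∀ x ∈ interior D, f' x ≤ 0) : AntitoneOn f D :=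
  antitoneOn_of_hasDerivWithinAt_nonpos hD (fun x hx => (hf x hx).continuousAt.continuousWithinAt)
    (fun x hx => (hf x (interior_subset hx)).hasDerivWithinAt) hf'

end Monotonicity

section Limits

variable {f g : ℝ → ℝ}

theorem AntitoneOn.nonpos_of_eventually_le (hf : AntitoneOn f (Ioi 0))
    (hg : Tendsto g (𝓝[>] 0) (𝓝 0)) (hfg : ∀ᶠ r in 𝓝[>] 0, f r ≤ g r) {x : ℝ} (hx : 0 < x) :
    f x ≤ 0 := by
  refine ge_of_tendsto hg ?_
  have hnear : ∀ᶠ r in 𝓝[>] 0, r ∈ Ioo 0 x := Ioo_mem_nhdsGT hx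
  filter_upwards [hfg, hnear] with r hfr hr
  exact (hf hr.1 hx hr.2.le).trans hfr

theorem AntitoneOn.nonneg_of_eventually_ge (hf : AntitoneOn f (Ioi 0))
    (hg : Tendsto g atTop (𝓝 0)) (hfg : ∀ᶠ r in atTop, g r ≤ f r) {x : ℝ} (hx : 0 < x) :
    0 ≤ f x := by
  refine le_of_tendsto hg ?_
  filter_upwards [hfg, eventually_ge_atTop x] with r hfr hr
  exact hfr.trans (hf hx (hx.trans_le hr) hr)

end Limits

section PositiveFunction

variable {u : ℝ → ℝ} {c : ℝ}

/-- Otherwise `u + c r^(1-p)/(p-1)` would be monotone on `(0, r₀]`, hence bounded above there,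
although it exceeds `c r^(1-p)/(p-1) → ∞`. -/
theorem exists_rpow_mul_deriv_lt_of_pos (hu : DifferentiableOn ℝ u (Ioi 0))
    (hpos : ∀ r > 0, 0 < u r) {p r₀ : ℝ} (hp : 1 < p) (hc : 0 < c) (hr₀ : 0 < r₀) :
    ∃ r ∈ Ioc 0 r₀, r ^ p * deriv u r < c := by
  by_contra! h
  set F : ℝ → ℝ := fun r => u r + c / (p - 1) * r ^ (1 - p)
  have hF : ∀ r ∈ Ioc 0 r₀, HasDerivAt F (deriv u r - c * r ^ (-p)) r := by
    intro r hr
    have hpow := (Real.hasDerivAt_rpow_const (p := 1 - p) (Or.inl hr.1.ne')).const_mul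
      (c / (p - 1))
    have hur := (hu.differentiableAt (Ioi_mem_nhds hr.1)).hasDerivAt
    refine (hur.add hpow).congr_deriv ?_
    rw [show 1 - p - 1 = -p by ring]
    field_simp [(by linarith : p - 1 ≠ 0)]
    ring
  have hF_mono : MonotoneOn F (Ioc 0 r₀) := by
    refine monotoneOn_of_hasDerivAt_nonneg (convex_Ioc 0 r₀) hF fun r hr => ?_
    rw [interior_Ioc] at hr
    have hrp : 0 < r ^ p := Real.rpow_pos_of_pos hr.1 p
    have := h r ⟨hr.1, hr.2.le⟩
    rw [Real.rpow_neg hr.1.le, sub_nonneg, ← div_eq_mul_inv, div_le_iff₀ hrp]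
    linarith
  have hblowup : Tendsto (fun r => c / (p - 1) * r ^ (1 - p)) (𝓝[>] 0) atTop :=
    (tendsto_rpow_neg_nhdsGT_zero (by linarith)).const_mul_atTop (div_pos hc (by linarith))
  have hnear : ∀ᶠ r in 𝓝[>] 0, r ∈ Ioo 0 r₀ := Ioo_mem_nhdsGT hr₀
  obtain ⟨r, hr, hlarge⟩ := (hnear.and (hblowup.eventually_gt_atTop (F r₀))).exists
  have := hF_mono ⟨hr.1, hr.2.le⟩ ⟨hr₀, le_rfl⟩ hr.2.le
  linarith [hpos r hr.1]

/-- Otherwise `r^a (u + c/a)` would be antitone on `[r₀, ∞)`, although it exceeds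
`c r^a / a → ∞`. -/
theorem exists_neg_lt_mul_add_mul_deriv_of_pos (hu : DifferentiableOn ℝ u (Ioi 0))
    (hpos : ∀ r > 0, 0 < u r) {a r₀ : ℝ} (ha : 0 < a) (hc : 0 < c) (hr₀ : 0 < r₀) :
    ∃ r ≥ r₀, -c < a * u r + r * deriv u r := by
  by_contra! h
  set G : ℝ → ℝ := fun r => r ^ a * (u r + c / a)
  have hG : ∀ r ∈ Ici r₀, HasDerivAt G (r ^ a / r * (a * u r + r * deriv u r + c)) r := by
    intro r hr
    have hr0 : 0 < r := hr₀.trans_le hr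
    have hur := (hu.differentiableAt (Ioi_mem_nhds hr0)).hasDerivAt
    refine ((Real.hasDerivAt_rpow_const (p := a) (Or.inl hr0.ne')).mul
      (hur.add_const (c / a))).congr_deriv ?_
    rw [Real.rpow_sub_one hr0.ne']
    field_simp
    ring
  have hG_anti : AntitoneOn G (Ici r₀) := by
    refine antitoneOn_of_hasDerivAt_nonpos (convex_Ici r₀) hG fun r hr => ?_
    rw [interior_Ici] at hr
    have hr0 : 0 < r := hr₀.trans hr
    have := h r hr.le
    exact mul_nonpos_of_nonneg_of_nonpos (by positivity) (by linarith)
  have hgrowth : Tendsto (fun r => r ^ a * (c / a)) atTop atTop :=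
    (tendsto_rpow_atTop ha).atTop_mul_const (div_pos hc ha)
  obtain ⟨r, hr, hlarge⟩ :=
    ((eventually_ge_atTop r₀).and (hgrowth.eventually_gt_atTop (G r₀))).exists
  have hr0 : 0 < r := hr₀.trans_le hr
  have := hG_anti (mem_Ici.2 le_rfl) hr hr
  have : 0 < r ^ a * u r := mul_pos (Real.rpow_pos_of_pos hr0 a) (hpos r hr0)
  simp only [G, mul_add] at *
  linarith

end PositiveFunction

noncomputable def radialLaplacian (n : ℝ) (u : ℝ → ℝ) (r : ℝ) : ℝ :=
  deriv (deriv u) r + (n - 1) / r * deriv u r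

noncomputable def radialWronskian (n : ℝ) (φ u : ℝ → ℝ) (r : ℝ) : ℝ :=
  r ^ (n - 1) * (φ r * deriv u r - deriv φ r * u r)

/-- `bubble n (|x|)` is, up to a constant, the conformal factor of the stereographic projection
`ℝⁿ → Sⁿ`. -/
noncomputable def bubble (n r : ℝ) : ℝ := (1 + r ^ 2) ^ (-(n - 2) / 2)

section Radial

variable {n : ℝ} {u φ : ℝ → ℝ} {r : ℝ}

theorem ContDiffOn.hasDerivAt_of_isOpen {s : Set ℝ} (hu : ContDiffOn ℝ 2 u s) (hs : IsOpen s)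
    (hr : r ∈ s) : HasDerivAt u (deriv u r) r :=
  ((hu.differentiableOn (by norm_num)).differentiableAt (hs.mem_nhds hr)).hasDerivAt

theorem ContDiffOn.hasDerivAt_deriv_of_isOpen {s : Set ℝ} (hu : ContDiffOn ℝ 2 u s)
    (hs : IsOpen s) (hr : r ∈ s) : HasDerivAt (deriv u) (deriv (deriv u) r) r :=
  (((hu.deriv_of_isOpen hs (m := 1) (by norm_num)).differentiableOn (by norm_num))
    |>.differentiableAt (hs.mem_nhds hr)).hasDerivAt

theorem hasDerivAt_rpow_mul_deriv (hr : 0 < r)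
    (hu : HasDerivAt (deriv u) (deriv (deriv u) r) r) :
    HasDerivAt (fun s => s ^ (n - 1) * deriv u s) (r ^ (n - 1) * radialLaplacian n u r) r := by
  refine ((Real.hasDerivAt_rpow_const (Or.inl hr.ne')).mul hu).congr_deriv ?_
  rw [Real.rpow_sub_one hr.ne', radialLaplacian]
  field_simp
  ring

theorem hasDerivAt_mul_add_mul_deriv (hr : 0 < r) (hu : HasDerivAt u (deriv u r) r)
    (hu' : HasDerivAt (deriv u) (deriv (deriv u) r) r) :
    HasDerivAt (fun s => (n - 2) * u s + s * deriv u s) (r * radialLaplacian n u r) r := by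
  refine ((hu.const_mul (n - 2)).add ((hasDerivAt_id r).mul hu')).congr_deriv ?_
  rw [radialLaplacian, id]
  field_simp
  ring

theorem hasDerivAt_radialWronskian (hr : 0 < r)
    (hφ : HasDerivAt φ (deriv φ r) r) (hφ' : HasDerivAt (deriv φ) (deriv (deriv φ) r) r)
    (hu : HasDerivAt u (deriv u r) r) (hu' : HasDerivAt (deriv u) (deriv (deriv u) r) r) :
    HasDerivAt (radialWronskian n φ u)
      (r ^ (n - 1) * (φ r * radialLaplacian n u r - u r * radialLaplacian n φ r)) r := by
  refine ((Real.hasDerivAt_rpow_const (Or.inl hr.ne')).mul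
    ((hφ.fun_mul hu').fun_sub (hφ'.fun_mul hu))).congr_deriv ?_
  rw [Real.rpow_sub_one hr.ne', radialLaplacian, radialLaplacian]
  field_simp
  ring

theorem hasDerivAt_one_add_sq (r : ℝ) : HasDerivAt (fun s : ℝ => 1 + s ^ 2) (2 * r) r := by
  simpa using (hasDerivAt_pow 2 r).const_add 1

theorem hasDerivAt_bubble (n r : ℝ) :
    HasDerivAt (bubble n) (-(n - 2) * r * bubble n r / (1 + r ^ 2)) r := by
  have hpos : (0 : ℝ) < 1 + r ^ 2 := by positivity
  refine ((hasDerivAt_one_add_sq r).rpow_const (p := -(n - 2) / 2) (Or.inl hpos.ne')).congr_deriv ?_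
  rw [Real.rpow_sub_one hpos.ne', bubble]
  ring

theorem deriv_bubble (n : ℝ) :
    deriv (bubble n) = fun r => -(n - 2) * r * bubble n r / (1 + r ^ 2) :=
  funext fun r => (hasDerivAt_bubble n r).deriv

theorem radialLaplacian_bubble (hr : r ≠ 0) :
    radialLaplacian n (bubble n) r + n * (n - 2) / (1 + r ^ 2) ^ 2 * bubble n r = 0 := by
  have hpos : (0 : ℝ) < 1 + r ^ 2 := by positivity
  have h2 := (((hasDerivAt_id r).const_mul (-(n - 2))).fun_mul (hasDerivAt_bubble n r)).fun_div
    (hasDerivAt_one_add_sq r) hpos.ne'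
  simp only [id] at h2
  rw [radialLaplacian, deriv_bubble, h2.deriv]
  field_simp
  ring

theorem rpow_mul_bubble_le_one (hn : 2 ≤ n) (hr : 0 < r) : r ^ (n - 2) * bubble n r ≤ 1 := by
  have hpos : (0 : ℝ) < 1 + r ^ 2 := by positivity
  have hsq : r ^ (n - 2) = (r ^ 2) ^ ((n - 2) / 2) := by
    rw [← Real.rpow_two, ← Real.rpow_mul hr.le]
    ring_nf
  rw [hsq, bubble, neg_div, Real.rpow_neg hpos.le, ← div_eq_mul_inv,
    div_le_one (Real.rpow_pos_of_pos hpos _)]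
  exact Real.rpow_le_rpow (by positivity) (by linarith) (by linarith)

end Radial

theorem contDiff_bubble (n : ℝ) : ContDiff ℝ 2 (bubble n) :=
  (contDiff_const.add (contDiff_id.pow 2)).rpow_const_of_ne fun r => by positivity

theorem bubble_pos (n r : ℝ) : 0 < bubble n r :=
  Real.rpow_pos_of_pos (by positivity) _

/-- `bubble n` solves the linear equation, so the Wronskian's derivative has the sign of
`radialLaplacian n u + n (n - 2) / (1 + r²)² u`. -/
theorem strictAntiOn_radialWronskian_bubble {n : ℝ} {u : ℝ → ℝ} (hu : ContDiffOn ℝ 2 u (Ioi 0))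
    (hsuper : ∀ r > 0, radialLaplacian n u r + n * (n - 2) / (1 + r ^ 2) ^ 2 * u r < 0) :
    StrictAntiOn (radialWronskian n (bubble n) u) (Ioi 0) := by
  have hbubble := (contDiff_bubble n).contDiffOn (s := Ioi 0)
  refine strictAntiOn_of_hasDerivAt_neg (convex_Ioi 0) (fun r hr =>
    hasDerivAt_radialWronskian hr (hbubble.hasDerivAt_of_isOpen isOpen_Ioi hr)
      (hbubble.hasDerivAt_deriv_of_isOpen isOpen_Ioi hr) (hu.hasDerivAt_of_isOpen isOpen_Ioi hr)
      (hu.hasDerivAt_deriv_of_isOpen isOpen_Ioi hr)) fun r hr => ?_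
  rw [interior_Ioi, mem_Ioi] at hr
  have hψ := radialLaplacian_bubble (n := n) hr.ne'
  have hderiv : bubble n r * radialLaplacian n u r - u r * radialLaplacian n (bubble n) r
      = bubble n r * (radialLaplacian n u r + n * (n - 2) / (1 + r ^ 2) ^ 2 * u r) := by
    linear_combination (-u r) * hψ
  rw [hderiv]
  exact mul_neg_of_pos_of_neg (Real.rpow_pos_of_pos hr _)
    (mul_neg_of_pos_of_neg (bubble_pos n r) (hsuper r hr))

section Supersolution

variable {n : ℝ} {u : ℝ → ℝ} {r : ℝ}

theorem deriv_neg_of_radialLaplacian_neg (hn : 2 < n) (hu : ContDiffOn ℝ 2 u (Ioi 0))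
    (hpos : ∀ r > 0, 0 < u r) (hΔ : ∀ r > 0, radialLaplacian n u r < 0) (hr : 0 < r) :
    deriv u r < 0 := by
  set m : ℝ → ℝ := fun s => s ^ (n - 1) * deriv u s
  have hm : StrictAntiOn m (Ioi 0) := by
    refine strictAntiOn_of_hasDerivAt_neg (convex_Ioi 0) (fun s hs =>
      hasDerivAt_rpow_mul_deriv hs (hu.hasDerivAt_deriv_of_isOpen isOpen_Ioi hs)) fun s hs => ?_
    rw [interior_Ioi, mem_Ioi] at hs
    exact mul_neg_of_pos_of_neg (Real.rpow_pos_of_pos hs _) (hΔ s hs)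
  have hm_nonpos : ∀ s > 0, m s ≤ 0 := by
    intro s hs
    by_contra! h
    obtain ⟨t, ht, hlt⟩ := exists_rpow_mul_deriv_lt_of_pos (hu.differentiableOn (by norm_num))
      hpos (p := n - 1) (by linarith) h hs
    exact hlt.not_ge (hm.antitoneOn ht.1 hs ht.2)
  have : m r < 0 := (hm (half_pos hr) hr (half_lt_self hr)).trans_le (hm_nonpos _ (half_pos hr))
  exact neg_of_mul_neg_right this (Real.rpow_nonneg hr.le _)

theorem mul_add_mul_deriv_pos_of_radialLaplacian_neg (hn : 2 < n)
    (hu : ContDiffOn ℝ 2 u (Ioi 0)) (hpos : ∀ r > 0, 0 < u r)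
    (hΔ : ∀ r > 0, radialLaplacian n u r < 0) (hr : 0 < r) :
    0 < (n - 2) * u r + r * deriv u r := by
  set q : ℝ → ℝ := fun s => (n - 2) * u s + s * deriv u s
  have hq : StrictAntiOn q (Ioi 0) := by
    refine strictAntiOn_of_hasDerivAt_neg (convex_Ioi 0) (fun s hs =>
      hasDerivAt_mul_add_mul_deriv hs (hu.hasDerivAt_of_isOpen isOpen_Ioi hs)
        (hu.hasDerivAt_deriv_of_isOpen isOpen_Ioi hs)) fun s hs => ?_
    rw [interior_Ioi, mem_Ioi] at hs
    exact mul_neg_of_pos_of_neg hs (hΔ s hs)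
  have hq_nonneg : ∀ s > 0, 0 ≤ q s := by
    intro s hs
    by_contra! h
    obtain ⟨t, ht, hlt⟩ := exists_neg_lt_mul_add_mul_deriv_of_pos
      (hu.differentiableOn (by norm_num)) hpos (a := n - 2) (by linarith) (neg_pos.2 h) hs
    have := hq.antitoneOn hs (hs.trans_le ht) ht
    linarith
  have h2r : 0 < 2 * r := by positivity
  exact (hq_nonneg (2 * r) h2r).trans_lt (hq hr h2r (by linarith))

theorem antitoneOn_of_radialLaplacian_neg (hn : 2 < n) (hu : ContDiffOn ℝ 2 u (Ioi 0))
    (hpos : ∀ r > 0, 0 < u r) (hΔ : ∀ r > 0, radialLaplacian n u r < 0) :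
    AntitoneOn u (Ioi 0) := by
  refine antitoneOn_of_hasDerivAt_nonpos (convex_Ioi 0)
    (fun s hs => hu.hasDerivAt_of_isOpen isOpen_Ioi hs) fun s hs => ?_
  rw [interior_Ioi, mem_Ioi] at hs
  exact (deriv_neg_of_radialLaplacian_neg hn hu hpos hΔ hs).le

theorem monotoneOn_rpow_mul_of_radialLaplacian_neg (hn : 2 < n) (hu : ContDiffOn ℝ 2 u (Ioi 0))
    (hpos : ∀ r > 0, 0 < u r) (hΔ : ∀ r > 0, radialLaplacian n u r < 0) :
    MonotoneOn (fun s => s ^ (n - 2) * u s) (Ioi 0) := by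
  refine monotoneOn_of_hasDerivAt_nonneg (convex_Ioi 0) (fun s hs =>
    (Real.hasDerivAt_rpow_const (Or.inl (ne_of_gt hs))).mul
      (hu.hasDerivAt_of_isOpen isOpen_Ioi hs)) fun s hs => ?_
  rw [interior_Ioi, mem_Ioi] at hs
  have hderiv : (n - 2) * s ^ (n - 2 - 1) * u s + s ^ (n - 2) * deriv u s
      = s ^ (n - 2) / s * ((n - 2) * u s + s * deriv u s) := by
    rw [Real.rpow_sub_one hs.ne']
    field_simp
  rw [hderiv]
  exact (mul_pos (div_pos (Real.rpow_pos_of_pos hs _) hs)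
    (mul_add_mul_deriv_pos_of_radialLaplacian_neg hn hu hpos hΔ hs)).le

theorem radialWronskian_bubble_le (hn : 2 < n) (hu : ContDiffOn ℝ 2 u (Ioi 0))
    (hpos : ∀ r > 0, 0 < u r) (hΔ : ∀ r > 0, radialLaplacian n u r < 0) (hr : 0 < r)
    (hr₁ : r ≤ 1) :
    radialWronskian n (bubble n) u r ≤ (n - 2) * u 1 * r ^ 2 := by
  have hsplit : radialWronskian n (bubble n) u r = r ^ (n - 1) * bubble n r * deriv u r
      + (n - 2) * r ^ 2 * (bubble n r / (1 + r ^ 2)) * (r ^ (n - 2) * u r) := by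
    rw [radialWronskian, deriv_bubble, show n - 1 = n - 2 + 1 by ring,
      Real.rpow_add_one hr.ne']
    ring
  have hfirst : r ^ (n - 1) * bubble n r * deriv u r ≤ 0 :=
    mul_nonpos_of_nonneg_of_nonpos (mul_pos (Real.rpow_pos_of_pos hr _) (bubble_pos n r)).le
      (deriv_neg_of_radialLaplacian_neg hn hu hpos hΔ hr).le
  have hψ : bubble n r / (1 + r ^ 2) ≤ 1 := by
    rw [div_le_one (by positivity)]
    exact (Real.rpow_le_one_of_one_le_of_nonpos (by nlinarith) (by linarith)).trans (by nlinarith)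
  have hg : r ^ (n - 2) * u r ≤ u 1 := by
    simpa using monotoneOn_rpow_mul_of_radialLaplacian_neg hn hu hpos hΔ hr (mem_Ioi.2 one_pos) hr₁
  have hsecond : (n - 2) * r ^ 2 * (bubble n r / (1 + r ^ 2)) * (r ^ (n - 2) * u r)
      ≤ (n - 2) * r ^ 2 * 1 * u 1 := by
    have : 0 ≤ r ^ (n - 2) * u r := (mul_pos (Real.rpow_pos_of_pos hr _) (hpos r hr)).le
    have : 0 ≤ bubble n r / (1 + r ^ 2) := (div_pos (bubble_pos n r) (by positivity)).le
    have : 0 ≤ n - 2 := by linarith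
    gcongr
  linarith

theorem neg_div_sq_le_radialWronskian_bubble (hn : 2 < n) (hu : ContDiffOn ℝ 2 u (Ioi 0))
    (hpos : ∀ r > 0, 0 < u r) (hΔ : ∀ r > 0, radialLaplacian n u r < 0) (hr₁ : 1 ≤ r) :
    -((n - 2) * u 1) / r ^ 2 ≤ radialWronskian n (bubble n) u r := by
  have hr : 0 < r := one_pos.trans_le hr₁
  have hsplit : radialWronskian n (bubble n) u r
      = r ^ (n - 2) * bubble n r * ((n - 2) * u r + r * deriv u r)
        - (n - 2) * (r ^ (n - 2) * bubble n r) * u r / (1 + r ^ 2) := by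
    rw [radialWronskian, deriv_bubble, show n - 1 = n - 2 + 1 by ring,
      Real.rpow_add_one hr.ne']
    field_simp
    ring
  have hfirst : 0 ≤ r ^ (n - 2) * bubble n r * ((n - 2) * u r + r * deriv u r) :=
    (mul_pos (mul_pos (Real.rpow_pos_of_pos hr _) (bubble_pos n r))
      (mul_add_mul_deriv_pos_of_radialLaplacian_neg hn hu hpos hΔ hr)).le
  have hsecond : (n - 2) * (r ^ (n - 2) * bubble n r) * u r / (1 + r ^ 2)
      ≤ (n - 2) * u 1 / r ^ 2 := by
    have : 0 ≤ r ^ (n - 2) * bubble n r :=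
      (mul_pos (Real.rpow_pos_of_pos hr _) (bubble_pos n r)).le
    have : 0 ≤ n - 2 := by linarith
    have := hpos r hr
    have := hpos 1 one_pos
    calc (n - 2) * (r ^ (n - 2) * bubble n r) * u r / (1 + r ^ 2)
        ≤ (n - 2) * 1 * u 1 / (1 + r ^ 2) := by
          gcongr
          · exact rpow_mul_bubble_le_one hn.le hr
          · exact antitoneOn_of_radialLaplacian_neg hn hu hpos hΔ (mem_Ioi.2 one_pos) hr hr₁
      _ ≤ (n - 2) * u 1 / r ^ 2 := by
          rw [mul_one]
          gcongr
          linarith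
  rw [hsplit, neg_div]
  linarith

end Supersolution

theorem not_exists_pos_strict_supersolution {n : ℝ} (hn : 2 < n) :
    ¬ ∃ u : ℝ → ℝ, ContDiffOn ℝ 2 u (Ioi 0) ∧ (∀ r > 0, 0 < u r) ∧
      ∀ r > 0, radialLaplacian n u r + n * (n - 2) / (1 + r ^ 2) ^ 2 * u r < 0 := by
  rintro ⟨u, hu, hpos, hsuper⟩
  have hΔ : ∀ r > 0, radialLaplacian n u r < 0 := fun r hr => by
    have := hpos r hr
    have : 0 < n - 2 := by linarith
    have : 0 < n * (n - 2) / (1 + r ^ 2) ^ 2 * u r := by positivity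
    linarith [hsuper r hr]
  have hW := strictAntiOn_radialWronskian_bubble hu hsuper
  have hW_nonpos : radialWronskian n (bubble n) u 1 ≤ 0 := by
    refine hW.antitoneOn.nonpos_of_eventually_le (g := fun r => (n - 2) * u 1 * r ^ 2) ?_ ?_ one_pos
    · exact ((continuous_pow 2).const_mul ((n - 2) * u 1)).tendsto' 0 0 (by simp)
        |>.mono_left nhdsWithin_le_nhds
    · have hnear : ∀ᶠ r in 𝓝[>] (0 : ℝ), r ∈ Ioo 0 1 := Ioo_mem_nhdsGT one_pos
      filter_upwards [hnear] with r hr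
      exact radialWronskian_bubble_le hn hu hpos hΔ hr.1 hr.2.le
  have hW_nonneg : 0 ≤ radialWronskian n (bubble n) u 2 := by
    refine hW.antitoneOn.nonneg_of_eventually_ge (g := fun r => -((n - 2) * u 1) / r ^ 2) ?_ ?_
      two_pos
    · exact tendsto_const_nhds.div_atTop (tendsto_pow_atTop two_ne_zero)
    · filter_upwards [eventually_ge_atTop 1] with r hr
      exact neg_div_sq_le_radialWronskian_bubble hn hu hpos hΔ hr
  exact (hW (mem_Ioi.2 one_pos) (mem_Ioi.2 two_pos) one_lt_two).not_ge (hW_nonneg.trans' hW_nonpos)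

theorem stmt14 (n : ℕ) (hn : 3 ≤ n) (β : ℝ) (hβ : β ≤ 0) :
    ¬ ∃ u : ℝ → ℝ,
        ContDiffOn ℝ 2 u (Set.Ioi (0 : ℝ)) ∧
        (∀ r : ℝ, 0 < r → 0 < u r) ∧
        (∀ r : ℝ, 0 < r →
          deriv (deriv u) r + (((n : ℝ) - 1) / r) * deriv u r
            + (((n : ℝ) * ((n : ℝ) - 2) - 4 * β) / (1 + r ^ 2) ^ 2) * u r
            + u r ^ (((n : ℝ) + 2) / ((n : ℝ) - 2)) = 0) := by
  rintro ⟨u, hu, hpos, hode⟩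
  have hn' : (2 : ℝ) < n := by exact_mod_cast hn
  refine not_exists_pos_strict_supersolution hn' ⟨u, hu, hpos, fun r hr => ?_⟩
  have hpow : 0 < u r ^ (((n : ℝ) + 2) / ((n : ℝ) - 2)) := Real.rpow_pos_of_pos (hpos r hr) _
  have hβu : 4 * β / (1 + r ^ 2) ^ 2 * u r ≤ 0 :=
    mul_nonpos_of_nonpos_of_nonneg (div_nonpos_of_nonpos_of_nonneg (by linarith) (by positivity))
      (hpos r hr).le
  have hsplit : radialLaplacian n u r + n * (n - 2) / (1 + r ^ 2) ^ 2 * u r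
      = 4 * β / (1 + r ^ 2) ^ 2 * u r - u r ^ (((n : ℝ) + 2) / ((n : ℝ) - 2)) := by
    rw [radialLaplacian]
    linear_combination hode r hr
  linarith
end
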